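/- arXiv:2604.12818 — 9 statements merged into one kernel-verified Lean document; each statement's English description precedes it below -/
import Mathlib

section
/- Let G be a DAG on a finite vertex set V, let s ∈ V be a sink, and let G̃ be the directed graph on V ∖ {s} obtained from G by deleting s and all edges into s. Then for all pairwise disjoint subsets X, Y, Z of V ∖ {s}: X and Y are d-separated by Z in G̃ if and only if X and Y are d-separated by Z in G. Consequently, if a family of random variables (X_v)_{v∈V} with values in standard Borel spaces satisfies the global Markov property with respect to G, then d-separation of X and Y by Z in the pruned graph G̃ implies conditional independence of (X_v)_{v∈X} and (X_v)_{v∈Y} given the σ-algebra generated by (X_v)_{v∈Z}. -/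
/-! ## Directed graphs, paths, d-separation -/

namespace DeltaSwig

variable {V : Type*}

/-- `b` is a descendant of `a`: reachable from `a` by a nonempty directed path. -/
def Descendant (E : V → V → Prop) (a b : V) : Prop := Relation.TransGen E a b

/-- A directed graph is a DAG if no vertex is related to itself by the
transitive closure of the edge relation. -/
def IsDAG (E : V → V → Prop) : Prop := ∀ v : V, ¬ Relation.TransGen E v v

/-- A path of length `k ≥ 1` between `v 0` and `v k`: pairwise distinct vertices,
consecutive vertices joined by an edge in either direction. -/
structure IsPath (E : V → V → Prop) (k : ℕ) (v : ℕ → V) : Prop where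
  one_le : 1 ≤ k
  inj : ∀ i ≤ k, ∀ j ≤ k, v i = v j → i = j
  adj : ∀ i < k, E (v i) (v (i + 1)) ∨ E (v (i + 1)) (v i)

/-- The interior vertex `v j` is a collider on the path `v`. -/
def IsCollider (E : V → V → Prop) (v : ℕ → V) (j : ℕ) : Prop :=
  E (v (j - 1)) (v j) ∧ E (v (j + 1)) (v j)

/-- The path `v` (of length `k`) is blocked by the set `Z`. -/
def Blocked (E : V → V → Prop) (k : ℕ) (v : ℕ → V) (Z : Set V) : Prop :=
  ∃ j, 0 < j ∧ j < k ∧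
    ((¬ IsCollider E v j ∧ v j ∈ Z) ∨
      (IsCollider E v j ∧ v j ∉ Z ∧ ∀ w, Descendant E (v j) w → w ∉ Z))

/-- `X` and `Y` are d-separated by `Z`: every path from a vertex of `X` to a
vertex of `Y` is blocked by `Z`. -/
def DSep (E : V → V → Prop) (X Y Z : Set V) : Prop :=
  ∀ (k : ℕ) (v : ℕ → V), IsPath E k v → v 0 ∈ X → v k ∈ Y → Blocked E k v Z

/-- Restriction of an edge relation to a set of kept vertices (vertex deletion). -/
def restrictEdge (E : V → V → Prop) (K : Set V) : V → V → Prop :=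
  fun a b => E a b ∧ a ∈ K ∧ b ∈ K

/-- The parents of a vertex. -/
def parents (E : V → V → Prop) (v : V) : Set V := {w | E w v}

end DeltaSwig

/-! ## Random vectors, conditional independence, Markov properties -/

namespace DeltaSwig

open MeasureTheory

universe u

/-- Product measurable space on the coordinates indexed by `A`, with an explicit
family of measurable space structures. -/
def piMS {V : Type*} {β : V → Type u} (mβ : ∀ v, MeasurableSpace (β v)) (A : Set V) :
    MeasurableSpace (∀ a : A, β a) :=
  @MeasurableSpace.pi A (fun a => β (a : V)) (fun a => mβ (a : V))

/-- The random vector `(X_v)_{v ∈ A}`. -/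
def jointMap {V Ω : Type*} {β : V → Type u} (X : ∀ v, Ω → β v) (A : Set V) :
    Ω → ∀ a : A, β (a : V) := fun ω a => X a ω

/-- The σ-algebra generated by the random variables `(X_v)_{v ∈ Z}`. -/
def sigmaGen {V Ω : Type*} {β : V → Type u} (mβ : ∀ v, MeasurableSpace (β v))
    (X : ∀ v, Ω → β v) (Z : Set V) : MeasurableSpace Ω :=
  MeasurableSpace.comap (jointMap X Z) (piMS mβ Z)

/-- Conditional probability of a set given a sub-σ-algebra, as a conditional
expectation of the indicator. -/
noncomputable def cprob {Ω : Type*} [mΩ : MeasurableSpace Ω] (μ : Measure Ω)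
    (m : MeasurableSpace Ω) (S : Set Ω) : Ω → ℝ :=
  @MeasureTheory.condExp Ω ℝ m mΩ _ _ μ (S.indicator fun _ => (1 : ℝ))

/-- Conditional independence of two random elements given a sub-σ-algebra `m`:
all conditional joint probabilities factorize a.s. -/
def CondIndepGiven {Ω β γ : Type*} [mΩ : MeasurableSpace Ω]
    (mβ : MeasurableSpace β) (mγ : MeasurableSpace γ)
    (μ : Measure Ω) (m : MeasurableSpace Ω) (F : Ω → β) (G : Ω → γ) : Prop :=
  ∀ A B, MeasurableSet[mβ] A → MeasurableSet[mγ] B →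
    cprob (mΩ := mΩ) μ m (F ⁻¹' A ∩ G ⁻¹' B) =ᵐ[μ]
      fun ω => cprob (mΩ := mΩ) μ m (F ⁻¹' A) ω * cprob (mΩ := mΩ) μ m (G ⁻¹' B) ω

/-- Conditional independence of the random vectors `(X_v)_{v∈A}` and
`(X_v)_{v∈B}` given a sub-σ-algebra `m`. -/
def CondIndepVec {V Ω : Type*} [mΩ : MeasurableSpace Ω] {β : V → Type u}
    (mβ : ∀ v, MeasurableSpace (β v)) (μ : Measure Ω) (m : MeasurableSpace Ω)
    (X : ∀ v, Ω → β v) (A B : Set V) : Prop :=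
  CondIndepGiven (mΩ := mΩ) (piMS mβ A) (piMS mβ B) μ m (jointMap X A) (jointMap X B)

/-- The global Markov property of the family `(X_v)_{v∈V}` with respect to the
directed graph `E`: d-separation implies conditional independence. -/
def GlobalMarkov {V Ω : Type*} [MeasurableSpace Ω] {β : V → Type u}
    (mβ : ∀ v, MeasurableSpace (β v)) (E : V → V → Prop)
    (X : ∀ v, Ω → β v) (μ : Measure Ω) : Prop :=
  ∀ A B Z : Set V, Disjoint A B → Disjoint A Z → Disjoint B Z →
    DSep E A B Z → CondIndepVec mβ μ (sigmaGen mβ X Z) X A B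

end DeltaSwig

namespace DeltaSwig

open MeasureTheory

universe u

private lemma desc_restrict {V : Type*} {E : V → V → Prop} {s : V}
    (hsink : ∀ w, ¬ E s w) {x w : V} (hx : x ≠ s)
    (h : Descendant E x w) (hw : w ≠ s) :
    Descendant (restrictEdge E {s}ᶜ) x w := by
  induction h with
  | single h => exact Relation.TransGen.single ⟨h, hx, hw⟩
  | tail hxb hbc ih =>
    rename_i b c
    have hb : b ≠ s := fun hbs => hsink c (hbs ▸ hbc)
    exact Relation.TransGen.tail (ih hb) ⟨hbc, hb, hw⟩

private lemma no_desc_of_sink {V : Type*} {E : V → V → Prop} {s w : V}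
    (hsink : ∀ w, ¬ E s w) (h : Descendant E s w) : False := by
  induction h with
  | single h => exact hsink _ h
  | tail _ _ ih => exact ih

/-- The key combinatorial statement: pruning a sink preserves d-separation. -/
private lemma dsep_iff_of_sink {V : Type*} {E : V → V → Prop} {s : V}
    (hsink : ∀ w, ¬ E s w) {A B Z : Set V}
    (hA : A ⊆ {s}ᶜ) (hB : B ⊆ {s}ᶜ) (hZ : Z ⊆ {s}ᶜ) :
    DSep (restrictEdge E {s}ᶜ) A B Z ↔ DSep E A B Z := by
  constructor
  · -- d-separation in the pruned graph implies d-separation in `G`.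
    intro hsep k v hp h0 hk
    by_cases hvs : ∃ j ≤ k, v j = s
    · -- the path visits `s`; then `s` is an interior collider with no
      -- descendants, so the path is blocked at `s`.
      obtain ⟨j, hjk, hjs⟩ := hvs
      have hj0 : j ≠ 0 := by rintro rfl; exact hA h0 hjs
      have hjk' : j ≠ k := by rintro rfl; exact hB hk hjs
      have hj0' : 0 < j := Nat.pos_of_ne_zero hj0
      have hjlt : j < k := lt_of_le_of_ne hjk hjk'
      have hsucc : j - 1 + 1 = j := Nat.succ_pred_eq_of_pos hj0'
      have h1 : E (v (j - 1)) (v j) := by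
        have := hp.adj (j - 1) (by omega)
        rw [hsucc] at this
        rcases this with h | h
        · exact h
        · exact absurd h (by rw [hjs]; exact hsink _)
      have h2 : E (v (j + 1)) (v j) := by
        rcases hp.adj j hjlt with h | h
        · exact absurd h (by rw [hjs]; exact hsink _)
        · exact h
      refine ⟨j, hj0', hjlt, Or.inr ⟨⟨h1, h2⟩, ?_, ?_⟩⟩
      · rw [hjs]; exact fun hsZ => hZ hsZ rfl
      · intro w hw _
        rw [hjs] at hw
        exact no_desc_of_sink hsink hw
    · -- the path avoids `s`; it is a path of the pruned graph, blocked there,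
      -- and blockedness transfers back.
      push_neg at hvs
      have hp' : IsPath (restrictEdge E {s}ᶜ) k v :=
        ⟨hp.one_le, hp.inj, fun i hik => by
          rcases hp.adj i hik with h | h
          · exact Or.inl ⟨h, hvs i (le_of_lt hik), hvs (i + 1) hik⟩
          · exact Or.inr ⟨h, hvs (i + 1) hik, hvs i (le_of_lt hik)⟩⟩
      obtain ⟨j, hj0, hjk, hcase⟩ := hsep k v hp' h0 hk
      have hiff : IsCollider (restrictEdge E {s}ᶜ) v j ↔ IsCollider E v j := by
        constructor
        · rintro ⟨h1, h2⟩; exact ⟨h1.1, h2.1⟩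
        · rintro ⟨h1, h2⟩
          exact ⟨⟨h1, hvs (j - 1) (by omega), hvs j (le_of_lt hjk)⟩,
            ⟨h2, hvs (j + 1) hjk, hvs j (le_of_lt hjk)⟩⟩
      rcases hcase with ⟨hnc, hvZ⟩ | ⟨hc, hnZ, hdesc⟩
      · exact ⟨j, hj0, hjk, Or.inl ⟨fun hc => hnc (hiff.mpr hc), hvZ⟩⟩
      · refine ⟨j, hj0, hjk, Or.inr ⟨hiff.mp hc, hnZ, fun w hw hwZ => ?_⟩⟩
        exact hdesc w
          (desc_restrict hsink (hvs j (le_of_lt hjk)) hw (fun h => hZ hwZ h)) hwZ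
  · -- d-separation in `G` implies d-separation in the pruned graph.
    intro hsep k v hp h0 hk
    have hvs : ∀ i ≤ k, v i ≠ s := by
      intro i hi
      rcases lt_or_eq_of_le hi with hlt | rfl
      · rcases hp.adj i hlt with h | h
        · exact h.2.1
        · exact h.2.2
      · have h1 : 1 ≤ i := hp.one_le
        have hsucc : i - 1 + 1 = i := Nat.succ_pred_eq_of_pos h1
        have := hp.adj (i - 1) (by omega)
        rw [hsucc] at this
        rcases this with h | h
        · exact h.2.2
        · exact h.2.1
    have hp' : IsPath E k v :=
      ⟨hp.one_le, hp.inj, fun i hik => by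
        rcases hp.adj i hik with h | h
        · exact Or.inl h.1
        · exact Or.inr h.1⟩
    obtain ⟨j, hj0, hjk, hcase⟩ := hsep k v hp' h0 hk
    have hiff : IsCollider (restrictEdge E {s}ᶜ) v j ↔ IsCollider E v j := by
      constructor
      · rintro ⟨h1, h2⟩; exact ⟨h1.1, h2.1⟩
      · rintro ⟨h1, h2⟩
        exact ⟨⟨h1, hvs (j - 1) (by omega), hvs j (le_of_lt hjk)⟩,
          ⟨h2, hvs (j + 1) hjk, hvs j (le_of_lt hjk)⟩⟩
    rcases hcase with ⟨hnc, hvZ⟩ | ⟨hc, hnZ, hdesc⟩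
    · exact ⟨j, hj0, hjk, Or.inl ⟨fun hc => hnc (hiff.mp hc), hvZ⟩⟩
    · refine ⟨j, hj0, hjk, Or.inr ⟨hiff.mpr hc, hnZ, fun w hw => ?_⟩⟩
      exact hdesc w (Relation.TransGen.mono (fun a b (h : restrictEdge E {s}ᶜ a b) => h.1) (v j) w hw)

/-- **Lemma: pruning a sink preserves d-separation.** Deleting a
sink `s` (together with its incoming edges) from a DAG leaves d-separation
among the remaining vertices unchanged; consequently, under the global Markov
property for `G`, d-separation in the pruned graph implies conditional
independence. -/
theorem pruneSink_dsep
    {V : Type*} [Finite V] (E : V → V → Prop) (hDAG : IsDAG E)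
    (s : V) (hsink : ∀ w, ¬ E s w)
    {Ω : Type*} [MeasurableSpace Ω] (μ : Measure Ω) [IsProbabilityMeasure μ]
    {β : V → Type u} (mβ : ∀ v, MeasurableSpace (β v))
    (hSB : ∀ v, @StandardBorelSpace (β v) (mβ v))
    (X : ∀ v, Ω → β v) :
    (∀ A B Z : Set V, A ⊆ {s}ᶜ → B ⊆ {s}ᶜ → Z ⊆ {s}ᶜ →
      Disjoint A B → Disjoint A Z → Disjoint B Z →
      (DSep (restrictEdge E {s}ᶜ) A B Z ↔ DSep E A B Z)) ∧
    (GlobalMarkov mβ E X μ →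
      ∀ A B Z : Set V, A ⊆ {s}ᶜ → B ⊆ {s}ᶜ → Z ⊆ {s}ᶜ →
        Disjoint A B → Disjoint A Z → Disjoint B Z →
        DSep (restrictEdge E {s}ᶜ) A B Z →
        CondIndepVec mβ μ (sigmaGen mβ X Z) X A B) := by
  refine ⟨fun A B Z hA hB hZ _ _ _ => dsep_iff_of_sink hsink hA hB hZ, ?_⟩
  intro hGM A B Z hA hB hZ hAB hAZ hBZ hsep
  exact hGM A B Z hAB hAZ hBZ ((dsep_iff_of_sink hsink hA hB hZ).mp hsep)

end DeltaSwig
end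

section
/- Let G be a directed graph on a finite vertex set and let d, y, x, w, o be pairwise distinct vertices such that o has no incoming edges. Let P be a path from d to w on which y appears as an interior non-collider. If P is not blocked by {x, o}, then at least one of the following holds: (a) the initial segment of P from d to y is not blocked by {x, w, o} and the edge of P joining y to its neighbour on that segment is directed out of y; (b) x is a descendant of y; (c) w is a descendant of y. -/
/-!
If `y` points forward along `P`, follow the path forward from `y`: either it is directed all
the way to `w`, or it reaches a first collider, which is a descendant of `y`. Since `P` is not
blocked by `{x, o}`, that collider has a descendant-or-self in `{x, o}`, and it cannot be `o`,
which has no parents; so `x` descends from `y`. Otherwise `y` points backward, and a vertex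
blocking the initial segment by `{x, w, o}` would block `P` by `{x, o}`, because `w` is the
endpoint of `P` and so does not lie on that segment.
-/

namespace DeltaSwig

section

variable {V : Type*} {E : V → V → Prop}

theorem transGen_of_forall_edge {v : ℕ → V} {i n : ℕ} (hin : i < n)
    (h : ∀ j, i ≤ j → j < n → E (v j) (v (j + 1))) : Relation.TransGen E (v i) (v n) := by
  induction n, hin using Nat.le_induction with
  | base => exact .single (h i le_rfl (by omega))
  | succ n _ ih => exact (ih fun j hj hjn => h j hj (by omega)).tail (h n (by omega) (by omega))

theorem eq_of_reflTransGen_of_forall_not_edge {a o : V} (ho : ∀ b, ¬ E b o)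
    (h : Relation.ReflTransGen E a o) : a = o := by
  rcases h.cases_tail with rfl | ⟨_, _, hlast⟩
  · rfl
  · exact absurd hlast (ho _)

namespace IsPath

variable {k : ℕ} {v : ℕ → V}

theorem edge_pred_of_not_isCollider (hP : IsPath E k v) {i : ℕ} (hi0 : 0 < i) (hik : i < k)
    (hnc : ¬ IsCollider E v i) (hback : E (v (i + 1)) (v i)) : E (v i) (v (i - 1)) := by
  have hadj := hP.adj (i - 1) (by omega)
  rw [Nat.sub_add_cancel hi0] at hadj
  exact hadj.resolve_left fun hin => hnc ⟨hin, hback⟩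

theorem directed_or_exists_isCollider (hP : IsPath E k v) {i : ℕ}
    (hout : E (v i) (v (i + 1))) :
    (∀ j, i ≤ j → j < k → E (v j) (v (j + 1))) ∨
      ∃ n, i < n ∧ n < k ∧ IsCollider E v n ∧ Descendant E (v i) (v n) := by
  classical
  by_cases hdir : ∀ j, i ≤ j → j < k → E (v j) (v (j + 1))
  · exact .inl hdir
  push Not at hdir
  right
  obtain ⟨hin, hnk, hrev⟩ := Nat.find_spec hdir
  set n := Nat.find hdir
  have hfwd : ∀ j, i ≤ j → j < n → E (v j) (v (j + 1)) := fun j hij hjn => by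
    by_contra hj
    exact Nat.find_min hdir hjn ⟨hij, by omega, hj⟩
  have hin : i < n := lt_of_le_of_ne hin fun h => hrev (h ▸ hout)
  have hpred : E (v (n - 1)) (v n) := by
    simpa only [Nat.sub_add_cancel (Nat.one_le_of_lt hin)] using hfwd (n - 1) (by omega) (by omega)
  exact ⟨n, hin, hnk, ⟨hpred, (hP.adj n hnk).resolve_left hrev⟩,
    transGen_of_forall_edge hin hfwd⟩

end IsPath

theorem exists_mem_reflTransGen_of_not_blocked {k n : ℕ} {v : ℕ → V} {Z : Set V}
    (hnb : ¬ Blocked E k v Z) (hn0 : 0 < n) (hnk : n < k) (hcol : IsCollider E v n) :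
    ∃ u ∈ Z, Relation.ReflTransGen E (v n) u := by
  by_contra! hnone
  refine hnb ⟨n, hn0, hnk, .inr ⟨hcol, fun hmem => hnone _ hmem .refl, fun u hu hmem => ?_⟩⟩
  exact hnone u hmem hu.to_reflTransGen

theorem Blocked.of_initial_segment {i k : ℕ} {v : ℕ → V} {Z Z' : Set V}
    (hB : Blocked E i v Z) (hik : i ≤ k) (hsub : Z' ⊆ Z)
    (hkeep : ∀ j < i, v j ∈ Z → v j ∈ Z') : Blocked E k v Z' := by
  obtain ⟨j, hj0, hji, hnc | ⟨hcol, hnmem, hdesc⟩⟩ := hB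
  · exact ⟨j, hj0, by omega, .inl ⟨hnc.1, hkeep j hji hnc.2⟩⟩
  · exact ⟨j, hj0, by omega,
      .inr ⟨hcol, fun h => hnmem (hsub h), fun u hu h => hdesc u hu (hsub h)⟩⟩

end

theorem path_through_noncollider_general
    {V : Type*} (E : V → V → Prop)
    (y x w o : V)
    (ho : ∀ a, ¬ E a o)
    (k : ℕ) (v : ℕ → V) (hP : IsPath E k v) (hw : v k = w)
    (i : ℕ) (hi0 : 0 < i) (hik : i < k) (hy : v i = y)
    (hnc : ¬ IsCollider E v i)
    (hnb : ¬ Blocked E k v {x, o}) :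
    (¬ Blocked E i v {x, w, o} ∧ E (v i) (v (i - 1))) ∨
      Descendant E y x ∨ Descendant E y w := by
  subst hy hw
  by_cases hfwd : E (v i) (v (i + 1))
  · right
    rcases hP.directed_or_exists_isCollider hfwd with hdir | ⟨n, hin, hnk, hcol, hdesc⟩
    · exact .inr (transGen_of_forall_edge hik hdir)
    · obtain ⟨u, rfl | rfl, hnu⟩ :=
        exists_mem_reflTransGen_of_not_blocked hnb (by omega) hnk hcol
      · exact .inl (hdesc.trans_left hnu)
      · exact absurd (eq_of_reflTransGen_of_forall_not_edge ho hnu ▸ hcol.1) (ho _)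
  · have hback := (hP.adj i hik).resolve_left hfwd
    refine .inl ⟨fun hB => hnb (hB.of_initial_segment hik.le ?_ ?_),
      hP.edge_pred_of_not_isCollider hi0 hik hnc hback⟩
    · exact Set.insert_subset_insert (Set.subset_insert _ _)
    · rintro j hji (h | h | h)
      · exact .inl h
      · exact absurd (hP.inj j (by omega) k le_rfl h) (by omega)
      · exact .inr h

/-- **Lemma C.1 on post-treatment controls, path case analysis.**
Let `P` be a path `v` from `d` to `w` of length `k` on which `y = v i`
(`0 < i < k`) appears as an interior non-collider, and suppose `o` has no
incoming edges. If `P` is not blocked by `{x, o}`, then either (a) the initial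
segment of `P` from `d` to `y` is not blocked by `{x, w, o}` and the edge of
`P` joining `y` to its neighbour on that segment is directed out of `y`, or
(b) `x` is a descendant of `y`, or (c) `w` is a descendant of `y`. -/
theorem path_through_noncollider
    {V : Type*} [Finite V] (E : V → V → Prop)
    (d y x w o : V)
    (hdist : List.Pairwise (· ≠ ·) [d, y, x, w, o])
    (ho : ∀ a, ¬ E a o)
    (k : ℕ) (v : ℕ → V) (hP : IsPath E k v) (hd : v 0 = d) (hw : v k = w)
    (i : ℕ) (hi0 : 0 < i) (hik : i < k) (hy : v i = y)
    (hnc : ¬ IsCollider E v i)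
    (hnb : ¬ Blocked E k v {x, o}) :
    (¬ Blocked E i v {x, w, o} ∧ E (v i) (v (i - 1))) ∨
      Descendant E y x ∨ Descendant E y w :=
  path_through_noncollider_general E y x w o ho k v hP hw i hi0 hik hy hnc hnb

end DeltaSwig
end

section
/- Let G be a DAG on a finite vertex set containing pairwise distinct vertices d, u, y, e, δ, x, w, o such that: G contains the edges (u,d), (u,y), (e,y) and (e,δ); the vertex e has no incoming edges and its only children are y and δ; δ is a sink; and o has no incoming edges. Then the following three conditions cannot all hold simultaneously: (i) {d} and {w} are d-separated by {x, y, o}; (ii) {d} and {w} are not d-separated by {x, o}; (iii) {d} and {δ} are d-separated by {x, w, o}. (Interpretation: in any two-period Δ-SWIG with unobserved confounding — which always contains the path D ← U → Y₀ ← U_{Y₀} → ΔY₁(0) — covariate unconfoundedness of the post-treatment covariate X₁(0) that genuinely requires conditioning on the pre-treatment outcome Y₀ is incompatible with conditional parallel trends given X₀ and X₁(0).) -/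
namespace DeltaSwig

section MainHelpers
variable {V : Type*} {E : V → V → Prop} {k : ℕ} {v : ℕ → V} {Z : Set V}

lemma descendant_last {a b : V} (h : Relation.TransGen E a b) : ∃ c, E c b := by
  induction h with
  | single h => exact ⟨_, h⟩
  | tail _ h _ => exact ⟨_, h⟩

lemma transGen_of_chain {j : ℕ} :
    ∀ i, j < i → (∀ m, j ≤ m → m < i → E (v m) (v (m + 1))) →
      Relation.TransGen E (v j) (v i) := by
  intro i
  induction i with
  | zero => omega
  | succ n ih =>
    intro hji h
    rcases Nat.lt_or_ge j n with h1 | h1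
    · exact (ih h1 fun m hm hm' => h m hm (by omega)).tail (h n (by omega) (by omega))
    · have hj : j = n := by omega
      subst hj
      exact Relation.TransGen.single (h j le_rfl (by omega))

lemma chain_all (hp : IsPath E k v) (hnb : ¬ Blocked E k v Z) {j : ℕ}
    (hstart : E (v j) (v (j + 1)))
    (hdesc : ∀ a, Relation.TransGen E (v j) a → a ∉ Z) :
    ∀ i, j ≤ i → i < k → E (v i) (v (i + 1)) := by
  intro i
  induction i using Nat.strong_induction_on with
  | _ i ih =>
    intro hji hik
    rcases Nat.eq_or_lt_of_le hji with rfl | hlt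
    · exact hstart
    · have hchain : ∀ m, j ≤ m → m < i → E (v m) (v (m + 1)) :=
        fun m hm hm' => ih m hm' hm (by omega)
      have hprev : E (v (i - 1)) (v i) := by
        have h := hchain (i - 1) (by omega) (by omega)
        rwa [Nat.sub_add_cancel (by omega)] at h
      rcases hp.adj i hik with h | h
      · exact h
      · exfalso
        have hdi : Relation.TransGen E (v j) (v i) := transGen_of_chain i hlt hchain
        exact hnb ⟨i, by omega, hik, Or.inr ⟨⟨hprev, h⟩, hdesc _ hdi,
          fun a ha => hdesc a (hdi.trans ha)⟩⟩

lemma isPath_reverse (hp : IsPath E k v) : IsPath E k (fun i => v (k - i)) where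
  one_le := hp.one_le
  inj := by
    intro i hi j hj hij
    have := hp.inj (k - i) (by omega) (k - j) (by omega) hij
    omega
  adj := by
    intro i hik
    have h := hp.adj (k - i - 1) (by omega)
    rw [show k - i - 1 + 1 = k - i from by omega] at h
    exact h.symm

lemma blocked_reverse (hb : Blocked E k (fun i => v (k - i)) Z) : Blocked E k v Z := by
  obtain ⟨m, hm0, hmk, hc⟩ := hb
  have h1 : k - (m - 1) = k - m + 1 := by omega
  have hcoll : IsCollider E (fun i => v (k - i)) m ↔ IsCollider E v (k - m) := by
    constructor
    · rintro ⟨a, b⟩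
      refine ⟨b, ?_⟩
      have a' : E (v (k - (m - 1))) (v (k - m)) := a
      rwa [h1] at a'
    · rintro ⟨a, b⟩
      refine ⟨?_, a⟩
      show E (v (k - (m - 1))) (v (k - m))
      rwa [h1]
  refine ⟨k - m, by omega, by omega, ?_⟩
  rcases hc with ⟨hnc, hmem⟩ | ⟨hcol, hmem, hd⟩
  · exact Or.inl ⟨fun hc' => hnc (hcoll.mpr hc'), hmem⟩
  · exact Or.inr ⟨hcoll.mp hcol, hmem, hd⟩

end MainHelpers


/-- **Appendix C: post-treatment covariates impossibility.** In
any DAG containing the configuration `d ← u → y ← e → δ` with `e` exogenous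
(no incoming edges) whose only children are `y` and `δ`, with `δ` a sink and
`o` having no incoming edges, the following cannot all hold: `{d}` and `{w}`
are d-separated by `{x, y, o}`; `{d}` and `{w}` are *not* d-separated by
`{x, o}`; and `{d}` and `{δ}` are d-separated by `{x, w, o}`. -/
theorem no_graphical_motivation_post_treatment
    {V : Type*} [Finite V] (E : V → V → Prop) (hDAG : IsDAG E)
    (d u y e δ x w o : V)
    (hdist : List.Pairwise (· ≠ ·) [d, u, y, e, δ, x, w, o])
    (hud : E u d) (huy : E u y) (hey : E e y) (heδ : E e δ)
    (he_noin : ∀ a, ¬ E a e)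
    (he_children : ∀ a, E e a → a = y ∨ a = δ)
    (hδsink : ∀ a, ¬ E δ a)
    (ho : ∀ a, ¬ E a o) :
    ¬ (DSep E {d} {w} {x, y, o} ∧ ¬ DSep E {d} {w} {x, o} ∧
        DSep E {d} {δ} {x, w, o}) := by
  rintro ⟨h1, h2, h3⟩
  simp only [List.pairwise_cons, List.mem_cons, List.not_mem_nil, or_false,
    forall_eq_or_imp, forall_eq] at hdist
  obtain ⟨⟨hdu, hdy, hde, hdδ, hdx, hdw, hdo⟩, ⟨huy2, hue, huδ, hux, huw, huo⟩,
    ⟨hye, hyδ, hyx, hyw, hyo⟩, ⟨heδ2, hex, hew, heo⟩, ⟨hδx, hδw, hδo⟩,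
    ⟨hxw, hxo⟩, hwo, -⟩ := hdist
  have asym : ∀ a b : V, E a b → ¬ E b a := fun a b hab hba =>
    hDAG a (Relation.TransGen.head hab (Relation.TransGen.single hba))
  -- Step 1: from h3 on the path d ← u → y ← e → δ, no descendant of y is in {x,w,o}
  have Ldesc : ∀ a, Relation.TransGen E y a → a ∉ ({x, w, o} : Set V) := by
    set p5 : ℕ → V := fun i =>
      if i = 0 then d else if i = 1 then u else if i = 2 then y else if i = 3 then e else δ
      with hp5
    have hpath5 : IsPath E 4 p5 := by
      refine ⟨by norm_num, ?_, ?_⟩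
      · intro i hi j hj hij
        interval_cases i <;> interval_cases j <;> simp_all [p5] <;> omega
      · intro i hi
        interval_cases i
        · exact Or.inr hud
        · exact Or.inl huy
        · exact Or.inr hey
        · exact Or.inl heδ
    have hB5 := h3 4 p5 hpath5 (by simp [p5]) (by simp [p5])
    obtain ⟨m, hm0, hm4, hc⟩ := hB5
    interval_cases m
    · exfalso
      rcases hc with ⟨-, hmem⟩ | ⟨⟨hcol1, -⟩, -, -⟩
      · have : u ∈ ({x, w, o} : Set V) := hmem
        simp only [Set.mem_insert_iff, Set.mem_singleton_iff] at this
        tauto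
      · exact asym u d hud hcol1
    · rcases hc with ⟨hnc, -⟩ | ⟨-, -, hd⟩
      · exact absurd ⟨huy, hey⟩ hnc
      · exact fun a ha => hd a ha
    · exfalso
      rcases hc with ⟨-, hmem⟩ | ⟨⟨hcol1, -⟩, -, -⟩
      · have : e ∈ ({x, w, o} : Set V) := hmem
        simp only [Set.mem_insert_iff, Set.mem_singleton_iff] at this
        tauto
      · exact he_noin y hcol1
  have LdescXO : ∀ a, Relation.TransGen E y a → a ∉ ({x, o} : Set V) := by
    intro a ha hmem
    apply Ldesc a ha
    simp only [Set.mem_insert_iff, Set.mem_singleton_iff] at hmem ⊢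
    tauto
  -- Step 2: extract an unblocked path from d to w given {x,o}
  unfold DSep at h2
  push_neg at h2
  obtain ⟨k, v, hp, hv0, hvk, hnb⟩ := h2
  have hv0' : v 0 = d := hv0
  have hvk' : v k = w := hvk
  have hnb' := hnb
  unfold Blocked at hnb'
  push_neg at hnb'
  have hBp := h1 k v hp hv0 hvk
  obtain ⟨j, hj0, hjk, hcj⟩ := hBp
  have key : v j = y ∧ ¬ IsCollider E v j := by
    rcases hcj with ⟨hnc, hmem⟩ | ⟨hcol, hnm, hdj⟩
    · refine ⟨?_, hnc⟩
      have h9 := (hnb' j hj0 hjk).1 hnc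
      simp only [Set.mem_insert_iff, Set.mem_singleton_iff] at hmem h9
      tauto
    · exfalso
      have hnm2 : v j ∉ ({x, o} : Set V) := by
        intro hm
        apply hnm
        simp only [Set.mem_insert_iff, Set.mem_singleton_iff] at hm ⊢
        tauto
      obtain ⟨a, hda, hma⟩ := (hnb' j hj0 hjk).2 hcol hnm2
      apply hdj a hda
      simp only [Set.mem_insert_iff, Set.mem_singleton_iff] at hma ⊢
      tauto
  obtain ⟨hvj, hnc⟩ := key
  have hadjL := hp.adj (j - 1) (by omega)
  rw [Nat.sub_add_cancel hj0] at hadjL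
  have hadjR := hp.adj j hjk
  rcases hadjR with hout | hinR
  · -- Case A: edge out of y to the right; then w is a descendant of y
    have hdesc' : ∀ a, Relation.TransGen E (v j) a → a ∉ ({x, o} : Set V) :=
      fun a ha => LdescXO a (hvj ▸ ha)
    have hdw : Relation.TransGen E (v j) (v k) :=
      transGen_of_chain k hjk (chain_all hp hnb hout hdesc')
    rw [hvj, hvk'] at hdw
    exact Ldesc w hdw (by simp)
  rcases hadjL with hinL | hout
  · exact hnc ⟨hinL, hinR⟩
  -- Case B: edge out of y to the left; then d is a descendant of y
  · have hpr : IsPath E k (fun i => v (k - i)) := isPath_reverse hp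
    have hnbr : ¬ Blocked E k (fun i => v (k - i)) {x, o} :=
      fun hb => hnb (blocked_reverse hb)
    have hstart : E (v (k - (k - j))) (v (k - (k - j + 1))) := by
      rw [show k - (k - j) = j from by omega, show k - (k - j + 1) = j - 1 from by omega]
      exact hout
    have hdesc' : ∀ a, Relation.TransGen E (v (k - (k - j))) a → a ∉ ({x, o} : Set V) := by
      intro a ha
      rw [show k - (k - j) = j from by omega, hvj] at ha
      exact LdescXO a ha
    have hchainR : ∀ i, k - j ≤ i → i < k →
        E (v (k - i)) (v (k - (i + 1))) :=
      chain_all hpr hnbr hstart hdesc'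
    have chainB : ∀ m, 1 ≤ m → m ≤ j → E (v m) (v (m - 1)) := by
      intro m h1m hmj
      have h := hchainR (k - m) (by omega) (by omega)
      rwa [show k - (k - m) = m from by omega,
        show k - (k - m + 1) = m - 1 from by omega] at h
    have hdesc_vi : ∀ i, i < j → Relation.TransGen E y (v i) := by
      intro i hij
      have h := transGen_of_chain (v := fun i => v (k - i)) (j := k - j) (k - i)
        (by omega) (fun m hm hm' => hchainR m hm (by omega))
      rwa [show k - (k - j) = j from by omega, show k - (k - i) = i from by omega, hvj] at h
    set Q : ℕ → V := fun i => if i ≤ j then v i else if i = j + 1 then e else δ with hQdef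
    have hQle : ∀ i, i ≤ j → Q i = v i := fun i hi => if_pos hi
    have hQe : Q (j + 1) = e := by
      show (if j + 1 ≤ j then v (j + 1) else if j + 1 = j + 1 then e else δ) = e
      rw [if_neg (by omega), if_pos rfl]
    have hQδ : Q (j + 2) = δ := by
      show (if j + 2 ≤ j then v (j + 2) else if j + 2 = j + 1 then e else δ) = δ
      rw [if_neg (by omega), if_neg (by omega)]
    have aux : ∀ i1 i2, i1 ≤ j → ¬ i2 ≤ j → i2 ≤ j + 2 → Q i1 = Q i2 → False := by
      intro i1 i2 c1 c2 hle h12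
      rcases (by omega : i2 = j + 1 ∨ i2 = j + 2) with rfl | rfl
      · rw [hQle i1 c1, hQe] at h12
        rcases Nat.eq_or_lt_of_le c1 with rfl | hlt
        · rw [hvj] at h12; exact hye h12
        · obtain ⟨c, hc⟩ := descendant_last (h12 ▸ hdesc_vi i1 hlt)
          exact he_noin c hc
      · rw [hQle i1 c1, hQδ] at h12
        rcases Nat.eq_zero_or_pos i1 with rfl | hpos
        · rw [hv0'] at h12; exact hdδ h12
        · exact hδsink (v (i1 - 1)) (h12 ▸ chainB i1 hpos c1)
    have hQpath : IsPath E (j + 2) Q := by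
      refine ⟨by omega, ?_, ?_⟩
      · intro i1 hi1 i2 hi2 h12
        by_cases c1 : i1 ≤ j <;> by_cases c2 : i2 ≤ j
        · rw [hQle i1 c1, hQle i2 c2] at h12
          exact hp.inj i1 (by omega) i2 (by omega) h12
        · exact absurd h12 (fun h => aux i1 i2 c1 c2 hi2 h)
        · exact absurd h12.symm (fun h => aux i2 i1 c2 c1 hi1 h)
        · rcases (by omega : i1 = j + 1 ∨ i1 = j + 2) with rfl | rfl <;>
            rcases (by omega : i2 = j + 1 ∨ i2 = j + 2) with rfl | rfl
          · rfl
          · rw [hQe, hQδ] at h12; exact absurd h12 heδ2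
          · rw [hQe, hQδ] at h12; exact absurd h12.symm heδ2
          · rfl
      · intro i hi
        by_cases c : i < j
        · right
          rw [hQle i (by omega), hQle (i + 1) (by omega)]
          have h := chainB (i + 1) (by omega) (by omega)
          rwa [Nat.add_sub_cancel] at h
        · rcases (by omega : i = j ∨ i = j + 1) with heq | heq
          · right; rw [heq, hQle j le_rfl, hQe, hvj]; exact hey
          · left; rw [heq, show j + 1 + 1 = j + 2 from rfl, hQe, hQδ]; exact heδ
    have hBQ := h3 (j + 2) Q hQpath
      (by rw [Set.mem_singleton_iff, hQle 0 (by omega)]; exact hv0')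
      (by rw [Set.mem_singleton_iff, hQδ])
    obtain ⟨m, hm0, hm2, hcm⟩ := hBQ
    by_cases hmj : m ≤ j
    · rcases hcm with ⟨-, hmem⟩ | ⟨⟨hc1, -⟩, -, -⟩
      · rw [hQle m hmj] at hmem
        rcases Nat.eq_or_lt_of_le hmj with heq | hlt
        · rw [heq, hvj] at hmem
          simp only [Set.mem_insert_iff, Set.mem_singleton_iff] at hmem
          rcases hmem with h | h | h
          exacts [hyx h, hyw h, hyo h]
        · exact Ldesc (v m) (hdesc_vi m hlt) hmem
      · have hc1' : E (v (m - 1)) (v m) := by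
          rwa [hQle (m - 1) (by omega), hQle m hmj] at hc1
        exact asym (v m) (v (m - 1)) (chainB m hm0 hmj) hc1'
    · have hm' : m = j + 1 := by omega
      subst hm'
      rcases hcm with ⟨-, hmem⟩ | ⟨⟨-, hc2⟩, -, -⟩
      · rw [hQe] at hmem
        simp only [Set.mem_insert_iff, Set.mem_singleton_iff] at hmem
        rcases hmem with h | h | h
        exacts [hex h, hew h, heo h]
      · have hc2' : E (Q (j + 2)) (Q (j + 1)) := hc2
        rw [hQδ, hQe] at hc2'
        exact hδsink e hc2' 


end DeltaSwig
end

section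
/- Let G be a DAG on a finite vertex set, let F be a set of vertices of G each having no incoming edges (the fixed nodes), and let V be the set of the remaining vertices. Let Z, R, N be pairwise disjoint subsets of V, and let v* ∈ V ∖ (Z ∪ R ∪ N) be a sink such that no parent of v* belongs to R and every parent p of v* satisfies at least one of the following: (a) p ∈ Z; (b) p ∈ F; (c) p has no parents, every child of p is a sink not belonging to R, and every child S of p with S ∈ Z ∪ N satisfies Pa(S) ∖ {p} ⊆ Z ∪ F. Then {v*} and R are d-separated by Z ∪ F in G, and {v*} and R are also d-separated by Z ∪ F ∪ N in G. -/
/-!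
A path from the sink `v` must leave it backwards, through a parent `p`, which is then a
non-collider. If `p` is conditioned on, the path is blocked at `p`. Otherwise `p` is a root, so
the path continues forwards to a child `c`; `c` is a sink outside `R`, so the path goes on and
`c` is a collider. Either `c` is not conditioned on, and being a sink it has no conditioned
descendant, so the path is blocked at `c`; or `c ∈ Z ∪ N` (having a parent, `c ∉ F`), and the
next vertex is another parent of `c`, hence lies in `Z ∪ F`, is not in `R`, and blocks the path
as a non-collider.
-/

namespace DeltaSwig

section

variable {V : Type*} {E : V → V → Prop}

theorem not_descendant_of_forall_not_adj {x y : V} (hx : ∀ a, ¬ E x a) :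
    ¬ Descendant E x y := by
  intro h
  obtain ⟨b, hxb, -⟩ := Relation.TransGen.head'_iff.mp h
  exact hx b hxb

theorem lt_of_le_of_apply_notMem {w : ℕ → V} {R : Set V} {i k : ℕ} (hi : i ≤ k)
    (hwi : w i ∉ R) (hwk : w k ∈ R) : i < k :=
  hi.lt_of_ne (by rintro rfl; exact hwi hwk)

namespace IsPath

variable {k : ℕ} {w : ℕ → V}

theorem adj_succ_of_forall_not_adj (hw : IsPath E k w) {i : ℕ} (hi : i < k)
    (hout : ∀ a, ¬ E (w i) a) : E (w (i + 1)) (w i) :=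
  (hw.adj i hi).resolve_left (hout _)

theorem adj_of_forall_not_adj_to (hw : IsPath E k w) {i : ℕ} (hi : i < k)
    (hin : ∀ a, ¬ E a (w i)) : E (w i) (w (i + 1)) :=
  (hw.adj i hi).resolve_right (hin _)

end IsPath

theorem not_isCollider_of_forall_not_adj {w : ℕ → V} {j : ℕ}
    (hout : ∀ a, ¬ E (w (j - 1)) a) : ¬ IsCollider E w j :=
  fun h => hout _ h.1

theorem blocked_of_not_isCollider {k j : ℕ} {w : ℕ → V} {W : Set V} (hj : 0 < j) (hjk : j < k)
    (hcol : ¬ IsCollider E w j) (hW : w j ∈ W) : Blocked E k w W :=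
  ⟨j, hj, hjk, Or.inl ⟨hcol, hW⟩⟩

theorem blocked_of_isCollider_of_forall_not_adj {k j : ℕ} {w : ℕ → V} {W : Set V}
    (hj : 0 < j) (hjk : j < k) (hcol : IsCollider E w j) (hW : w j ∉ W)
    (hout : ∀ a, ¬ E (w j) a) : Blocked E k w W :=
  ⟨j, hj, hjk, Or.inr ⟨hcol, hW, fun _ h _ => not_descendant_of_forall_not_adj hout h⟩⟩

section NeutralParent

variable {F Z R N W : Set V}

theorem blocked_of_neutral_parent (hF : ∀ f ∈ F, ∀ a, ¬ E a f) (hR : R ⊆ Fᶜ)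
    (hZR : Disjoint Z R) (hZFW : Z ∪ F ⊆ W) (hWZFN : W ⊆ Z ∪ F ∪ N)
    {k : ℕ} {w : ℕ → V} (hw : IsPath E k w) (hk : w k ∈ R) (h1k : 1 < k)
    (hroot : ∀ a, ¬ E a (w 1))
    (hchild : ∀ c, E (w 1) c → (∀ a, ¬ E c a) ∧ c ∉ R)
    (hcoparent : ∀ c, E (w 1) c → c ∈ Z ∪ N → ∀ q, E q c → q ≠ w 1 → q ∈ Z ∪ F) :
    Blocked E k w W := by
  have hpc : E (w 1) (w 2) := hw.adj_of_forall_not_adj_to h1k hroot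
  obtain ⟨hc_sink, hc_notR⟩ := hchild _ hpc
  have h2k : 2 < k := lt_of_le_of_apply_notMem h1k hc_notR hk
  have hqc : E (w 3) (w 2) := hw.adj_succ_of_forall_not_adj h2k hc_sink
  by_cases hcW : w 2 ∈ W
  · have hcZN : w 2 ∈ Z ∪ N := by
      rcases hWZFN hcW with (hcZ | hcF) | hcN
      · exact Or.inl hcZ
      · exact absurd hpc (hF _ hcF _)
      · exact Or.inr hcN
    have hqp : w 3 ≠ w 1 := fun h => by
      have := hw.inj 3 h2k 1 h1k.le h
      omega
    have hqZF : w 3 ∈ Z ∪ F := hcoparent _ hpc hcZN _ hqc hqp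
    have hq_notR : w 3 ∉ R := by
      rcases hqZF with hqZ | hqF
      · exact hZR.notMem_of_mem_left hqZ
      · exact fun hqR => hR hqR hqF
    exact blocked_of_not_isCollider (by omega) (lt_of_le_of_apply_notMem h2k hq_notR hk)
      (not_isCollider_of_forall_not_adj hc_sink) (hZFW hqZF)
  · exact blocked_of_isCollider_of_forall_not_adj (by omega) h2k ⟨hpc, hqc⟩ hcW hc_sink

theorem dSep_of_parents_neutral (hF : ∀ f ∈ F, ∀ a, ¬ E a f) (hR : R ⊆ Fᶜ)
    (hZR : Disjoint Z R) (hZFW : Z ∪ F ⊆ W) (hWZFN : W ⊆ Z ∪ F ∪ N) {v : V}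
    (hsink : ∀ a, ¬ E v a) (hpR : ∀ p, E p v → p ∉ R)
    (hpar : ∀ p, E p v →
      p ∈ Z ∨ p ∈ F ∨
        ((∀ a, ¬ E a p) ∧ (∀ c, E p c → (∀ a, ¬ E c a) ∧ c ∉ R) ∧
          (∀ c, E p c → c ∈ Z ∪ N → ∀ q, E q c → q ≠ p → q ∈ Z ∪ F))) :
    DSep E {v} R W := by
  rintro k w hw rfl hk
  have hpv : E (w 1) (w 0) := hw.adj_succ_of_forall_not_adj hw.one_le hsink
  have h1k : 1 < k := lt_of_le_of_apply_notMem hw.one_le (hpR _ hpv) hk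
  have hp_nc : ¬ IsCollider E w 1 := not_isCollider_of_forall_not_adj hsink
  rcases hpar _ hpv with hpZ | hpF | ⟨hroot, hchild, hcoparent⟩
  · exact blocked_of_not_isCollider one_pos h1k hp_nc (hZFW (Or.inl hpZ))
  · exact blocked_of_not_isCollider one_pos h1k hp_nc (hZFW (Or.inr hpF))
  · exact blocked_of_neutral_parent hF hR hZR hZFW hWZFN hw hk h1k hroot hchild hcoparent

end NeutralParent

end

theorem dsep_neutral_controls_general
    {V : Type*} (E : V → V → Prop)
    (F : Set V) (hF : ∀ f ∈ F, ∀ a, ¬ E a f)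
    (Z R N : Set V)
    (hR : R ⊆ Fᶜ)
    (hZR : Disjoint Z R)
    (v : V)
    (hsink : ∀ a, ¬ E v a)
    (hpR : ∀ p, E p v → p ∉ R)
    (hpar : ∀ p, E p v →
      p ∈ Z ∨ p ∈ F ∨
        ((∀ a, ¬ E a p) ∧ (∀ c, E p c → (∀ a, ¬ E c a) ∧ c ∉ R) ∧
          (∀ c, E p c → c ∈ Z ∪ N → ∀ q, E q c → q ≠ p → q ∈ Z ∪ F))) :
    DSep E {v} R (Z ∪ F) ∧ DSep E {v} R (Z ∪ F ∪ N) :=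
  ⟨dSep_of_parents_neutral hF hR hZR subset_rfl Set.subset_union_left hsink hpR hpar,
    dSep_of_parents_neutral hF hR hZR Set.subset_union_left subset_rfl hsink hpR hpar⟩

/-- **Lemma D.1, d-separation with neutral controls.** Let `F`
be a set of fixed nodes (no incoming edges) in a DAG, and let `Z, R, N` be
pairwise disjoint subsets of the remaining vertices `Fᶜ`. Let `v ∈ Fᶜ` be a
sink outside `Z ∪ R ∪ N` with no parent in `R`, each of whose parents `p`
satisfies: `p ∈ Z`, or `p ∈ F`, or (`p` has no parents, every child of `p` is
a sink not in `R`, and every child `c ∈ Z ∪ N` of `p` has all of its other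
parents in `Z ∪ F`). Then `{v}` and `R` are d-separated by `Z ∪ F`, and also
by `Z ∪ F ∪ N`. -/
theorem dsep_neutral_controls
    {V : Type*} [Finite V] (E : V → V → Prop) (hDAG : IsDAG E)
    (F : Set V) (hF : ∀ f ∈ F, ∀ a, ¬ E a f)
    (Z R N : Set V)
    (hZ : Z ⊆ Fᶜ) (hR : R ⊆ Fᶜ) (hN : N ⊆ Fᶜ)
    (hZR : Disjoint Z R) (hZN : Disjoint Z N) (hRN : Disjoint R N)
    (v : V) (hv : v ∈ Fᶜ) (hvZRN : v ∉ Z ∪ R ∪ N)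
    (hsink : ∀ a, ¬ E v a)
    (hpR : ∀ p, E p v → p ∉ R)
    (hpar : ∀ p, E p v →
      p ∈ Z ∨ p ∈ F ∨
        ((∀ a, ¬ E a p) ∧ (∀ c, E p c → (∀ a, ¬ E c a) ∧ c ∉ R) ∧
          (∀ c, E p c → c ∈ Z ∪ N → ∀ q, E q c → q ≠ p → q ∈ Z ∪ F))) :
    DSep E {v} R (Z ∪ F) ∧ DSep E {v} R (Z ∪ F ∪ N) :=
  dsep_neutral_controls_general E F hF Z R N hR hZR v hsink hpR hpar

end DeltaSwig
end

section
/- Let (Ω, 𝓕, μ) be a probability space, let C and G be events with μ(C) > 0 and μ(G) > 0, let W be a real random variable integrable under μ(·|C), and let Z and V be random variables with values in standard Borel spaces. Assume: (i) under μ(·|C), W and V are conditionally independent given the σ-algebra generated by Z; and (ii) the law of the pair (Z, V) under μ(·|G) is absolutely continuous with respect to its law under μ(·|C). Then for all measurable functions h and k such that h(Z) is a version of the conditional expectation of W given σ(Z) under μ(·|C) and k(Z, V) is a version of the conditional expectation of W given σ(Z, V) under μ(·|C), one has k(Z, V) = h(Z) μ(·|G)-almost surely; in particular, whenever h(Z)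 and k(Z,V) are integrable under μ(·|G), E_{μ(·|G)}[k(Z, V)] = E_{μ(·|G)}[h(Z)]. (Interpretation: the conditional difference-in-differences estimand is unchanged when a valid adjustment set Z is enlarged by additional covariates V that are conditionally independent of the untreated trend W given Z in the control group; hence every superset of a minimal valid adjustment set within the covariate sequence is again a valid adjustment set.) -/
namespace DiD

open MeasureTheory ProbabilityTheory

/-- Conditional probability of a set given a sub-σ-algebra, as a conditional
expectation of the indicator. -/
noncomputable def cprob {Ω : Type*} [mΩ : MeasurableSpace Ω] (μ : Measure Ω)
    (m : MeasurableSpace Ω) (S : Set Ω) : Ω → ℝ :=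
  MeasureTheory.condExp (m₀ := mΩ) m μ (S.indicator fun _ => (1 : ℝ))

/-- Conditional independence of two random elements given a sub-σ-algebra `m`
under the measure `μ`: all conditional joint probabilities factorize a.s. -/
def CondIndepGiven {Ω β γ : Type*} [mΩ : MeasurableSpace Ω]
    [mβ : MeasurableSpace β] [mγ : MeasurableSpace γ]
    (μ : Measure Ω) (m : MeasurableSpace Ω) (F : Ω → β) (G : Ω → γ) : Prop :=
  ∀ A B, MeasurableSet[mβ] A → MeasurableSet[mγ] B →
    cprob (mΩ := mΩ) μ m (F ⁻¹' A ∩ G ⁻¹' B) =ᵐ[μ]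
      fun ω => cprob (mΩ := mΩ) μ m (F ⁻¹' A) ω * cprob (mΩ := mΩ) μ m (G ⁻¹' B) ω

end DiD

namespace DiD

open MeasureTheory ProbabilityTheory

/-- Auxiliary: under conditional independence of `W` and `V` given `m`, the
integral of `W` over `s ∩ V⁻¹B` (with `s ∈ m`) equals that of `E[W | m]`. -/
lemma rect_integral_eq {Ω : Type*} {m : MeasurableSpace Ω} [mΩ : MeasurableSpace Ω]
    (hm : m ≤ mΩ) (ν : Measure Ω) [IsProbabilityMeasure ν]
    {η : Type*} [MeasurableSpace η]
    {V : Ω → η} (hV : Measurable V)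
    {W : Ω → ℝ} (hWint : Integrable W ν)
    (hCI : CondIndepGiven ν m W V)
    {s : Set Ω} (hs_m : MeasurableSet[m] s)
    {B : Set η} (hB : MeasurableSet B) :
    ∫ ω in s ∩ V ⁻¹' B, W ω ∂ν = ∫ ω in s ∩ V ⁻¹' B, (ν[W|m]) ω ∂ν := by
  have hs : MeasurableSet s := hm s hs_m
  have hRmeas : MeasurableSet (s ∩ V ⁻¹' B) := hs.inter (hV hB)
  -- measurable version of W
  have hW'sm : StronglyMeasurable (hWint.1.mk W) := hWint.1.stronglyMeasurable_mk
  set W' : Ω → ℝ := hWint.1.mk W with hW'_def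
  have hWW' : W =ᵐ[ν] W' := hWint.1.ae_eq_mk
  have hW'int : Integrable W' ν := hWint.congr hWW'
  -- transfer the conditional independence to W'
  have hCI' : ∀ A' : Set ℝ, MeasurableSet A' →
      cprob ν m (W' ⁻¹' A' ∩ V ⁻¹' B) =ᵐ[ν]
        fun ω => cprob ν m (W' ⁻¹' A') ω * cprob ν m (V ⁻¹' B) ω := by
    intro A' hA'
    have h1 : ((W ⁻¹' A' ∩ V ⁻¹' B : Set Ω).indicator fun _ => (1 : ℝ)) =ᵐ[ν]
        ((W' ⁻¹' A' ∩ V ⁻¹' B : Set Ω).indicator fun _ => (1 : ℝ)) := by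
      filter_upwards [hWW'] with ω hω
      have hiff : ω ∈ W ⁻¹' A' ∩ V ⁻¹' B ↔ ω ∈ W' ⁻¹' A' ∩ V ⁻¹' B := by
        simp [Set.mem_inter_iff, Set.mem_preimage, hω]
      by_cases hmem : ω ∈ W ⁻¹' A' ∩ V ⁻¹' B
      · rw [Set.indicator_of_mem hmem, Set.indicator_of_mem (hiff.1 hmem)]
      · rw [Set.indicator_of_notMem hmem,
          Set.indicator_of_notMem (fun hc => hmem (hiff.2 hc))]
    have h2 : ((W ⁻¹' A' : Set Ω).indicator fun _ => (1 : ℝ)) =ᵐ[ν]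
        ((W' ⁻¹' A' : Set Ω).indicator fun _ => (1 : ℝ)) := by
      filter_upwards [hWW'] with ω hω
      have hiff : ω ∈ W ⁻¹' A' ↔ ω ∈ W' ⁻¹' A' := by
        simp [Set.mem_preimage, hω]
      by_cases hmem : ω ∈ W ⁻¹' A'
      · rw [Set.indicator_of_mem hmem, Set.indicator_of_mem (hiff.1 hmem)]
      · rw [Set.indicator_of_notMem hmem,
          Set.indicator_of_notMem (fun hc => hmem (hiff.2 hc))]
    have e1 : cprob ν m (W ⁻¹' A' ∩ V ⁻¹' B) =ᵐ[ν] cprob ν m (W' ⁻¹' A' ∩ V ⁻¹' B) :=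
      condExp_congr_ae (m := m) (μ := ν) h1
    have e2 : cprob ν m (W ⁻¹' A') =ᵐ[ν] cprob ν m (W' ⁻¹' A') :=
      condExp_congr_ae (m := m) (μ := ν) h2
    filter_upwards [e1, e2, hCI A' B hA' hB] with ω he1 he2 hci
    calc cprob ν m (W' ⁻¹' A' ∩ V ⁻¹' B) ω = cprob ν m (W ⁻¹' A' ∩ V ⁻¹' B) ω := he1.symm
      _ = cprob ν m (W ⁻¹' A') ω * cprob ν m (V ⁻¹' B) ω := hci
      _ = cprob ν m (W' ⁻¹' A') ω * cprob ν m (V ⁻¹' B) ω := by rw [he2]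
  -- reduce to W'
  have hcongr : ∫ ω in s ∩ V ⁻¹' B, W ω ∂ν = ∫ ω in s ∩ V ⁻¹' B, W' ω ∂ν :=
    integral_congr_ae (ae_restrict_of_ae hWW')
  have hcongr2 : ∫ ω in s ∩ V ⁻¹' B, (ν[W|m]) ω ∂ν
      = ∫ ω in s ∩ V ⁻¹' B, (ν[W'|m]) ω ∂ν :=
    integral_congr_ae (ae_restrict_of_ae (condExp_congr_ae hWW'))
  rw [hcongr, hcongr2]
  -- induction on L¹ functions measurable w.r.t. σ(W')
  have hm₁ : MeasurableSpace.comap W' inferInstance ≤ mΩ := hW'sm.measurable.comap_le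
  have hmain : ∀ ⦃f : Ω → ℝ⦄, MemLp f 1 ν →
      AEStronglyMeasurable[MeasurableSpace.comap W' inferInstance] f ν →
      (∫ ω in s ∩ V ⁻¹' B, f ω ∂ν = ∫ ω in s ∩ V ⁻¹' B, (ν[f|m]) ω ∂ν) := by
    refine MemLp.induction_stronglyMeasurable hm₁ ENNReal.one_ne_top
      (fun f => ∫ ω in s ∩ V ⁻¹' B, f ω ∂ν = ∫ ω in s ∩ V ⁻¹' B, (ν[f|m]) ω ∂ν) ?_ ?_ ?_ ?_
    · -- indicator case
      rintro c t ⟨A', hA', rfl⟩ -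
      have htmeas : MeasurableSet (W' ⁻¹' A') := hW'sm.measurable hA'
      set t : Set Ω := W' ⁻¹' A' with ht_def
      set q : Ω → ℝ := cprob ν m t with hq_def
      set p : Ω → ℝ := cprob ν m (V ⁻¹' B) with hp_def
      have hq_sm : StronglyMeasurable[m] q := stronglyMeasurable_condExp
      have hq_int : Integrable q ν := integrable_condExp
      have h1B_int : Integrable ((V ⁻¹' B).indicator fun _ => (1 : ℝ)) ν :=
        (integrable_const (1 : ℝ)).indicator (hV hB)
      have hmul_eq : (q * (V ⁻¹' B).indicator fun _ => (1 : ℝ)) = (V ⁻¹' B).indicator q := by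
        funext ω
        by_cases h : ω ∈ V ⁻¹' B <;>
          simp [Set.indicator_of_mem, Set.indicator_of_notMem, h]
      have hprod_int : Integrable (q * (V ⁻¹' B).indicator fun _ => (1 : ℝ)) ν := by
        rw [hmul_eq]; exact hq_int.indicator (hV hB)
      have hpull : ν[q * (V ⁻¹' B).indicator fun _ => (1 : ℝ)|m] =ᵐ[ν]
          q * ν[(V ⁻¹' B).indicator fun _ => (1 : ℝ)|m] :=
        condExp_mul_of_stronglyMeasurable_left hq_sm hprod_int h1B_int
      -- compute ∫_{s ∩ V⁻¹B} q
      have key : ∫ ω in s ∩ V ⁻¹' B, q ω ∂ν = (ν (s ∩ (t ∩ V ⁻¹' B))).toReal := by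
        have s1 : ∫ ω in s ∩ V ⁻¹' B, q ω ∂ν = ∫ ω in s, (V ⁻¹' B).indicator q ω ∂ν :=
          (setIntegral_indicator (hV hB)).symm
        have s2 : ∫ ω in s, (V ⁻¹' B).indicator q ω ∂ν
            = ∫ ω in s, (q * (V ⁻¹' B).indicator fun _ => (1 : ℝ)) ω ∂ν := by
          rw [hmul_eq]
        have s3 : ∫ ω in s, (q * (V ⁻¹' B).indicator fun _ => (1 : ℝ)) ω ∂ν
            = ∫ ω in s, (ν[q * (V ⁻¹' B).indicator fun _ => (1 : ℝ)|m]) ω ∂ν :=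
          (setIntegral_condExp hm hprod_int hs_m).symm
        have s4 : ∫ ω in s, (ν[q * (V ⁻¹' B).indicator fun _ => (1 : ℝ)|m]) ω ∂ν
            = ∫ ω in s, (q ω * p ω) ∂ν := by
          refine integral_congr_ae (ae_restrict_of_ae ?_)
          filter_upwards [hpull] with ω hω using hω
        have s5 : ∫ ω in s, (q ω * p ω) ∂ν
            = ∫ ω in s, cprob ν m (t ∩ V ⁻¹' B) ω ∂ν := by
          refine integral_congr_ae (ae_restrict_of_ae ?_)
          filter_upwards [hCI' A' hA'] with ω hω using hω.symm
        have s6 : ∫ ω in s, cprob ν m (t ∩ V ⁻¹' B) ω ∂ν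
            = ∫ ω in s, (t ∩ V ⁻¹' B).indicator (fun _ => (1 : ℝ)) ω ∂ν :=
          setIntegral_condExp hm
            ((integrable_const (1 : ℝ)).indicator (htmeas.inter (hV hB))) hs_m
        have s7 : ∫ ω in s, (t ∩ V ⁻¹' B).indicator (fun _ => (1 : ℝ)) ω ∂ν
            = (ν (s ∩ (t ∩ V ⁻¹' B))).toReal := by
          rw [setIntegral_indicator (htmeas.inter (hV hB)), setIntegral_const, smul_eq_mul,
            mul_one, measureReal_def]
        rw [s1, s2, s3, s4, s5, s6, s7]
      -- conclude the indicator case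
      have hsmul : (t.indicator fun _ => c) = c • t.indicator fun _ => (1 : ℝ) := by
        funext ω
        by_cases h : ω ∈ t <;>
          simp [Set.indicator_of_mem, Set.indicator_of_notMem, h]
      have hce : ν[t.indicator fun _ => c|m] =ᵐ[ν] c • q := by
        rw [hsmul]; exact condExp_smul c _ m
      have hRHS : ∫ ω in s ∩ V ⁻¹' B, (ν[t.indicator fun _ => c|m]) ω ∂ν
          = c * ∫ ω in s ∩ V ⁻¹' B, q ω ∂ν := by
        rw [integral_congr_ae (ae_restrict_of_ae hce)]
        simp only [Pi.smul_apply, smul_eq_mul]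
        exact integral_const_mul c _
      have hLHS : ∫ ω in s ∩ V ⁻¹' B, (t.indicator fun _ => c) ω ∂ν
          = (ν ((s ∩ V ⁻¹' B) ∩ t)).toReal * c := by
        rw [setIntegral_indicator htmeas, setIntegral_const, smul_eq_mul, measureReal_def]
      have hsets : (s ∩ V ⁻¹' B) ∩ t = s ∩ (t ∩ V ⁻¹' B) := by
        ext ω; simp only [Set.mem_inter_iff]; tauto
      rw [hLHS, hRHS, key, hsets, mul_comm]
    · -- additivity
      intro f g _ hfmem hgmem _ _ hPf hPg
      have hf : Integrable f ν := memLp_one_iff_integrable.1 hfmem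
      have hg : Integrable g ν := memLp_one_iff_integrable.1 hgmem
      have h1 : ∫ ω in s ∩ V ⁻¹' B, (f + g) ω ∂ν
          = ∫ ω in s ∩ V ⁻¹' B, f ω ∂ν + ∫ ω in s ∩ V ⁻¹' B, g ω ∂ν :=
        integral_add hf.integrableOn hg.integrableOn
      have h2 : ∫ ω in s ∩ V ⁻¹' B, (ν[f + g|m]) ω ∂ν
          = ∫ ω in s ∩ V ⁻¹' B, (ν[f|m]) ω ∂ν + ∫ ω in s ∩ V ⁻¹' B, (ν[g|m]) ω ∂ν := by
        rw [integral_congr_ae (ae_restrict_of_ae (condExp_add hf hg m))]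
        exact integral_add integrable_condExp.integrableOn integrable_condExp.integrableOn
      rw [h1, h2, hPf, hPg]
    · -- closedness
      have heq₁ : (fun f : lpMeas ℝ ℝ (MeasurableSpace.comap W' inferInstance) 1 ν =>
            ∫ ω in s ∩ V ⁻¹' B, (f : Ω → ℝ) ω ∂ν) =
          (fun f : Lp ℝ 1 ν => ∫ ω in s ∩ V ⁻¹' B, f ω ∂ν) ∘ Submodule.subtypeL _ := by
        refine funext fun f => integral_congr_ae (ae_restrict_of_ae ?_)
        simp_rw [Submodule.coe_subtypeL', Submodule.coe_subtype]
        exact Filter.Eventually.of_forall fun _ => by trivial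
      have heq₂ : (fun f : lpMeas ℝ ℝ (MeasurableSpace.comap W' inferInstance) 1 ν =>
            ∫ ω in s ∩ V ⁻¹' B, (ν[(f : Ω → ℝ)|m]) ω ∂ν) =
          ((fun g : Lp ℝ 1 ν => ∫ ω in s ∩ V ⁻¹' B, g ω ∂ν) ∘ condExpL1CLM ℝ hm ν) ∘
            Submodule.subtypeL _ := by
        refine funext fun f => ?_
        have hfint : Integrable ((f : Lp ℝ 1 ν) : Ω → ℝ) ν := L1.integrable_coeFn _
        have h := condExp_ae_eq_condExpL1CLM (E := ℝ) hm hfint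
        rw [hfint.toL1_coeFn] at h
        exact integral_congr_ae (ae_restrict_of_ae h)
      refine isClosed_eq ?_ ?_
      · rw [heq₁]
        exact (continuous_setIntegral _).comp (ContinuousLinearMap.continuous _)
      · rw [heq₂]
        exact ((continuous_setIntegral _).comp
          (condExpL1CLM ℝ hm ν).continuous).comp (ContinuousLinearMap.continuous _)
    · -- a.e. congruence
      intro f g hfg _ hPf
      have h1 : ∫ ω in s ∩ V ⁻¹' B, g ω ∂ν = ∫ ω in s ∩ V ⁻¹' B, f ω ∂ν :=
        integral_congr_ae (ae_restrict_of_ae hfg.symm)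
      have h2 : ∫ ω in s ∩ V ⁻¹' B, (ν[g|m]) ω ∂ν = ∫ ω in s ∩ V ⁻¹' B, (ν[f|m]) ω ∂ν :=
        integral_congr_ae (ae_restrict_of_ae (condExp_congr_ae hfg.symm))
      rw [h1, h2, hPf]
  -- apply to W'
  refine hmain (memLp_one_iff_integrable.2 hW'int) ?_
  refine StronglyMeasurable.aestronglyMeasurable ?_
  exact (measurable_iff_comap_le.2 le_rfl :
    Measurable[MeasurableSpace.comap W' inferInstance] W').stronglyMeasurable

/-- **Proposition 2, valid adjustment sets: enlargement.** If
`W` and `V` are conditionally independent given `σ(Z)` under `μ(·|C)` and the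
law of `(Z, V)` under `μ(·|G)` is absolutely continuous w.r.t. its law under
`μ(·|C)`, then any version `k(Z,V)` of `E_{μ(·|C)}[W ∣ σ(Z,V)]` agrees
`μ(·|G)`-a.s. with any version `h(Z)` of `E_{μ(·|C)}[W ∣ σ(Z)]`; in
particular, the corresponding adjusted means under `μ(·|G)` coincide. -/
theorem enlarging_valid_adjustment_set
    {Ω : Type*} [MeasurableSpace Ω] (μ : Measure Ω) [IsProbabilityMeasure μ]
    (C G : Set Ω) (hC : 0 < μ C) (hG : 0 < μ G)
    (W : Ω → ℝ) (hWint : Integrable W (μ[|C]))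
    {ζ η : Type*} [MeasurableSpace ζ] [StandardBorelSpace ζ]
    [MeasurableSpace η] [StandardBorelSpace η]
    (Z : Ω → ζ) (V : Ω → η) (hZ : Measurable Z) (hV : Measurable V)
    (hCI : CondIndepGiven (μ[|C]) (MeasurableSpace.comap Z inferInstance) W V)
    (hac : (μ[|G]).map (fun ω => (Z ω, V ω)) ≪
      (μ[|C]).map (fun ω => (Z ω, V ω))) :
    ∀ (h : ζ → ℝ) (k : ζ × η → ℝ), Measurable h → Measurable k →
      ((fun ω => h (Z ω)) =ᵐ[μ[|C]]
        MeasureTheory.condExp (MeasurableSpace.comap Z inferInstance)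
          (μ[|C]) W) →
      ((fun ω => k (Z ω, V ω)) =ᵐ[μ[|C]]
        MeasureTheory.condExp
          (MeasurableSpace.comap (fun ω => (Z ω, V ω)) inferInstance)
          (μ[|C]) W) →
      ((fun ω => k (Z ω, V ω)) =ᵐ[μ[|G]] fun ω => h (Z ω)) ∧
      (Integrable (fun ω => h (Z ω)) (μ[|G]) →
        Integrable (fun ω => k (Z ω, V ω)) (μ[|G]) →
        ∫ ω, k (Z ω, V ω) ∂(μ[|G]) = ∫ ω, h (Z ω) ∂(μ[|G])) := by
  intro h k hh hk hhv hkv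
  haveI : IsProbabilityMeasure (μ[|C]) := cond_isProbabilityMeasure hC.ne'
  have hpairm : Measurable (fun ω => (Z ω, V ω)) := hZ.prodMk hV
  have hm : MeasurableSpace.comap Z inferInstance ≤ ‹MeasurableSpace Ω› := hZ.comap_le
  have hmZV : MeasurableSpace.comap (fun ω => (Z ω, V ω)) inferInstance
      ≤ ‹MeasurableSpace Ω› := hpairm.comap_le
  have hle : MeasurableSpace.comap Z inferInstance
      ≤ MeasurableSpace.comap (fun ω => (Z ω, V ω)) inferInstance := by
    have hZeq : Z = Prod.fst ∘ (fun ω => (Z ω, V ω)) := rfl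
    rw [hZeq, ← MeasurableSpace.comap_comp]
    exact MeasurableSpace.comap_mono measurable_fst.comap_le
  -- tower property
  have htower : ((μ[|C])[W|MeasurableSpace.comap Z inferInstance]) =ᵐ[μ[|C]]
      (μ[|C])[W|MeasurableSpace.comap (fun ω => (Z ω, V ω)) inferInstance] := by
    refine ae_eq_condExp_of_forall_setIntegral_eq hmZV hWint
      (fun s _ _ => integrable_condExp.integrableOn) ?_
      ((stronglyMeasurable_condExp.mono hle).aestronglyMeasurable)
    rintro s ⟨T, hT, rfl⟩ -
    have main : ∀ ⦃T : Set (ζ × η)⦄, MeasurableSet T →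
        ∫ ω in (fun ω => (Z ω, V ω)) ⁻¹' T, W ω ∂(μ[|C])
          = ∫ ω in (fun ω => (Z ω, V ω)) ⁻¹' T,
              ((μ[|C])[W|MeasurableSpace.comap Z inferInstance]) ω ∂(μ[|C]) := by
      refine MeasurableSpace.induction_on_inter generateFrom_prod.symm isPiSystem_prod
        ?_ ?_ ?_ ?_
      · simp
      · rintro t ⟨A, hA, B, hB, rfl⟩
        have hpre : (fun ω => (Z ω, V ω)) ⁻¹' (A ×ˢ B) = Z ⁻¹' A ∩ V ⁻¹' B := by
          ext ω; simp
        rw [hpre]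
        exact rect_integral_eq hm (μ[|C]) hV hWint hCI ⟨A, hA, rfl⟩ hB
      · intro t ht hP
        have hcompl : (fun ω => (Z ω, V ω)) ⁻¹' tᶜ
            = ((fun ω => (Z ω, V ω)) ⁻¹' t)ᶜ := rfl
        have h1 := integral_add_compl (hpairm ht) hWint
        have h2 := integral_add_compl (hpairm ht)
          (integrable_condExp :
            Integrable ((μ[|C])[W|MeasurableSpace.comap Z inferInstance]) (μ[|C]))
        have h3 : ∫ ω, W ω ∂(μ[|C])
            = ∫ ω, ((μ[|C])[W|MeasurableSpace.comap Z inferInstance]) ω ∂(μ[|C]) :=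
          (integral_condExp hm).symm
        rw [hcompl]
        linarith
      · intro f hdisj hmeas hP
        have hpre : (fun ω => (Z ω, V ω)) ⁻¹' ⋃ i, f i
            = ⋃ i, (fun ω => (Z ω, V ω)) ⁻¹' f i := by
          simp [Set.preimage_iUnion]
        rw [hpre]
        have hd : Pairwise (Function.onFun Disjoint fun i => (fun ω => (Z ω, V ω)) ⁻¹' f i) :=
          fun i j hij => Disjoint.preimage _ (hdisj hij)
        rw [integral_iUnion (fun i => hpairm (hmeas i)) hd hWint.integrableOn,
          integral_iUnion (fun i => hpairm (hmeas i)) hd integrable_condExp.integrableOn]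
        exact tsum_congr fun i => hP i
    exact (main hT).symm
  -- k(Z,V) = h(Z) a.s. under μ[|C]
  have hae_ν : (fun ω => k (Z ω, V ω)) =ᵐ[μ[|C]] fun ω => h (Z ω) := by
    filter_upwards [hkv, htower, hhv] with ω h1 h2 h3
    rw [h1, ← h2, ← h3]
  -- transfer to μ[|G] via absolute continuity of laws
  have haeG : (fun ω => k (Z ω, V ω)) =ᵐ[μ[|G]] fun ω => h (Z ω) := by
    have hDmeas : MeasurableSet {x : ζ × η | k x ≠ h x.1} := by
      have : {x : ζ × η | k x ≠ h x.1} = {x : ζ × η | k x = h x.1}ᶜ := by ext x; simp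
      rw [this]
      exact (measurableSet_eq_fun hk (hh.comp measurable_fst)).compl
    have hpre : (fun ω => (Z ω, V ω)) ⁻¹' {x : ζ × η | k x ≠ h x.1}
        = {ω | ¬ k (Z ω, V ω) = h (Z ω)} := by
      ext ω; simp
    have hν0 : (μ[|C]).map (fun ω => (Z ω, V ω)) {x : ζ × η | k x ≠ h x.1} = 0 := by
      rw [Measure.map_apply hpairm hDmeas, hpre]
      exact hae_ν
    have hG0 : (μ[|G]).map (fun ω => (Z ω, V ω)) {x : ζ × η | k x ≠ h x.1} = 0 := hac hν0
    rw [Measure.map_apply hpairm hDmeas, hpre] at hG0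
    exact hG0
  exact ⟨haeG, fun _ _ => integral_congr_ae haeG⟩

end DiD
end

section
/- Let G be the directed graph on the nine vertices {U, X, D, o, Y₀, Y₁, Δ, E₀, E₁} with edge set {(U,Y₀), (U,Y₁), (U,D), (U,X), (X,Y₀), (X,Y₁), (X,D), (X,Δ), (E₀,Y₀), (E₀,Δ), (E₁,Y₁), (E₁,Δ), (o,Y₁), (o,Δ)}. (This is the Δ-SWIG of the canonical 2×2 difference-in-differences model with time-invariant covariate X, unobserved time-invariant confounder U, split treatment node with random part D and fixed part o, untreated potential outcomes Y₀ and Y₁ with exogenous noises E₀ and E₁, and difference node Δ = Y₁(0) − Y₀; the edge from U into Δ cancels under single world additive separability.) Then G is a DAG; {D} and {Δ} are d-separated by {X, o} in G; but {D} and {Δ} are not d-separated by {X, Y₀, o} in G (conditioning on the pre-treatment outcome Y₀ opens the path D ← U → Y₀ ← E₀ → Δ, i.e. M-bias). -/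
namespace DeltaSwig

/-- Vertices of the Δ-SWIG of the canonical 2×2 difference-in-differences
model with time-invariant covariates. -/
inductive V11 : Type
  | U | X | D | o | Y0 | Y1 | Δ | E0 | E1
  deriving DecidableEq

open V11 in
/-- Edges of the 2×2 Δ-SWIG with time-invariant covariate `X`. -/
def E11 : V11 → V11 → Prop := fun a b =>
  (a, b) ∈ ([(U, Y0), (U, Y1), (U, D), (U, X),
    (X, Y0), (X, Y1), (X, D), (X, Δ),
    (E0, Y0), (E0, Δ), (E1, Y1), (E1, Δ),
    (o, Y1), (o, Δ)] : List (V11 × V11))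

open V11

section

variable {V : Type*} {E : V → V → Prop} {k i j : ℕ} {v : ℕ → V} {Z : Set V}

theorem isDAG_of_rank {α : Type*} [Preorder α] (f : V → α) (hf : ∀ a b, E a b → f a < f b) :
    IsDAG E := fun a h =>
  lt_irrefl (f a) (Relation.transGen_eq_self.le _ _ (h.lift f hf))

theorem not_descendant_of_sink {a : V} (hsink : ∀ b, ¬ E a b) (w : V) : ¬ Descendant E a w :=
  fun hw => by
    obtain ⟨c, hc, -⟩ := Relation.TransGen.head'_iff.mp hw
    exact hsink c hc

instance [DecidableRel E] : DecidablePred (IsCollider E v) := fun _ =>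
  inferInstanceAs (Decidable (_ ∧ _))

namespace IsPath

theorem ne (hp : IsPath E k v) (hi : i ≤ k) (hj : j ≤ k) (hij : i ≠ j) : v i ≠ v j :=
  fun h => hij (hp.inj i hi j hj h)

theorem edge_into_sink_of_lt (hp : IsPath E k v) (hj : j < k) (hsink : ∀ b, ¬ E (v j) b) :
    E (v (j + 1)) (v j) :=
  (hp.adj j hj).resolve_left (hsink _)

theorem edge_into_sink_of_pos (hp : IsPath E k v) (hj0 : 0 < j) (hjk : j ≤ k)
    (hsink : ∀ b, ¬ E (v j) b) : E (v (j - 1)) (v j) := by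
  have hadj := hp.adj (j - 1) (by omega)
  rw [Nat.sub_add_cancel hj0] at hadj
  exact hadj.resolve_right (hsink _)

/-- A sink outside `Z` is a collider without descendants in `Z`. -/
theorem blocked_of_sink (hp : IsPath E k v) (hj0 : 0 < j) (hjk : j < k)
    (hsink : ∀ b, ¬ E (v j) b) (hZ : v j ∉ Z) : Blocked E k v Z :=
  ⟨j, hj0, hjk, .inr ⟨⟨hp.edge_into_sink_of_pos hj0 hjk.le hsink,
    hp.edge_into_sink_of_lt hjk hsink⟩, hZ, fun w hw _ => not_descendant_of_sink hsink w hw⟩⟩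

end IsPath

theorem not_blocked_of_active
    (h : ∀ j < k, 0 < j → (IsCollider E v j ∧ v j ∈ Z) ∨ (¬ IsCollider E v j ∧ v j ∉ Z)) :
    ¬ Blocked E k v Z := by
  rintro ⟨j, hj0, hjk, ⟨hnc, hZ⟩ | ⟨hc, hZ, -⟩⟩ <;>
    rcases h j hjk hj0 with ⟨hc', hZ'⟩ | ⟨hnc', hZ'⟩ <;> contradiction

end

instance : Fintype V11 where
  elems := {U, X, D, o, Y0, Y1, Δ, E0, E1}
  complete := by intro x; cases x <;> simp

instance : DecidableRel E11 := fun a b =>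
  inferInstanceAs (Decidable ((a, b) ∈ _))

def topoRank : V11 → ℕ
  | U | E0 | E1 | o => 0
  | X => 1
  | D | Y0 | Y1 | Δ => 2

theorem topoRank_lt_of_E11 : ∀ a b, E11 a b → topoRank a < topoRank b := by decide

theorem E11_sink_D : ∀ b, ¬ E11 D b := by decide
theorem E11_sink_Y0 : ∀ b, ¬ E11 Y0 b := by decide
theorem E11_sink_Y1 : ∀ b, ¬ E11 Y1 b := by decide
theorem E11_source_U : ∀ a, ¬ E11 a U := by decide
theorem E11_parents_D : ∀ a, E11 a D → a = U ∨ a = X := by decide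
theorem E11_parents_X : ∀ a, E11 a X → a = U := by decide
theorem E11_children_U : ∀ b, E11 U b → b = Y0 ∨ b = Y1 ∨ b = D ∨ b = X := by decide

/-- A path from the sink `D` starts `D ← X` (blocked at `X`) or `D ← U → w`, where `w` is the
childless collider `Y₀` or `Y₁`, or `w = X`, which is a non-collider since its only parent is `U`. -/
theorem dSep_D_Δ_X_o : DSep E11 {D} {Δ} {X, o} := by
  rintro k v hp (hv0 : v 0 = D) (hvk : v k = Δ)
  obtain hv1 | hv1 : v 1 = U ∨ v 1 = X :=
    E11_parents_D _ (hv0 ▸ hp.edge_into_sink_of_lt hp.one_le (hv0 ▸ E11_sink_D))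
  all_goals have h1k : 1 < k := lt_of_le_of_ne hp.one_le fun h => by subst h; simp_all
  case inr =>
    exact ⟨1, one_pos, h1k, .inl ⟨fun hc => E11_sink_D (v 1) (hv0 ▸ hc.1), by simp [hv1]⟩⟩
  have hv2 : v 2 = Y0 ∨ v 2 = Y1 ∨ v 2 = X := by
    have hU2 : E11 U (v 2) := hv1 ▸ (hp.adj 1 h1k).resolve_right (hv1 ▸ E11_source_U _)
    have hD2 : v 2 ≠ D := hv0 ▸ hp.ne (by omega) (by omega) (by omega)
    rcases E11_children_U _ hU2 with h | h | h | h <;> simp_all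
  have h2k : 2 < k := lt_of_le_of_ne h1k fun h => by subst h; rcases hv2 with h | h | h <;> simp_all
  rcases hv2 with hv2 | hv2 | hv2
  · exact hp.blocked_of_sink two_pos h2k (hv2 ▸ E11_sink_Y0) (by simp [hv2])
  · exact hp.blocked_of_sink two_pos h2k (hv2 ▸ E11_sink_Y1) (by simp [hv2])
  · refine ⟨2, two_pos, h2k, .inl ⟨fun hc => ?_, by simp [hv2]⟩⟩
    have hv3 : v 3 = U := E11_parents_X _ (hv2 ▸ hc.2)
    exact hp.ne (by omega) (by omega) (by omega : 3 ≠ 1) (hv3.trans hv1.symm)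

def mBiasPath (n : ℕ) : V11 := [D, U, Y0, E0, Δ].getD n Δ

theorem isPath_mBiasPath : IsPath E11 4 mBiasPath := ⟨by norm_num, by decide, by decide⟩

theorem not_blocked_mBiasPath : ¬ Blocked E11 4 mBiasPath {X, Y0, o} :=
  not_blocked_of_active (by decide)

/-- **2×2 Δ-SWIG with time-invariant covariates.** The graph is
a DAG; `{D}` and `{Δ}` are d-separated by `{X, o}`; but `{D}` and `{Δ}` are
not d-separated by `{X, Y₀, o}` (conditioning on the pre-treatment outcome
`Y₀` opens the path `D ← U → Y₀ ← E₀ → Δ`, i.e. M-bias). -/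
theorem deltaSWIG_2x2 :
    IsDAG E11 ∧ DSep E11 {D} {Δ} {X, o} ∧ ¬ DSep E11 {D} {Δ} {X, Y0, o} :=
  ⟨isDAG_of_rank topoRank topoRank_lt_of_E11, dSep_D_Δ_X_o,
    fun hsep => not_blocked_mBiasPath (hsep 4 mBiasPath isPath_mBiasPath rfl rfl)⟩

end DeltaSwig
end

section
/- Let G be the directed graph on the eight vertices {U, X₀, X₁, D, o, Y₀, Δ, E₀} with edge set {(U,Y₀), (U,D), (U,X₀), (U,X₁), (X₀,Y₀), (X₀,X₁), (X₀,Δ), (X₀,D), (X₁,Δ), (X₁,D), (E₀,Y₀), (E₀,Δ), (o,Δ)}. (This is the Δ-SWIG of the 2×2 difference-in-differences model with pre-treatment time-varying covariates X₀ and X₁, unobserved time-invariant confounder U whose effect on untreated potential outcomes is additively separable, pre-treatment outcome Y₀ with exogenous noise E₀, fixed treatment part o, and difference node Δ = Y₁(0) − Y₀.) Then G is a DAG and {D} and {Δ} are d-separated by {X₀, X₁, o} in G. -/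
namespace DeltaSwig

/-- Vertices of the Δ-SWIG of the 2×2 difference-in-differences model with
pre-treatment time-varying covariates. -/
inductive V12 : Type
  | U | X0 | X1 | D | o | Y0 | Δ | E0
  deriving DecidableEq

open V12 in
/-- Edges of the 2×2 Δ-SWIG with pre-treatment time-varying covariates. -/
def E12 : V12 → V12 → Prop := fun a b =>
  (a, b) ∈ ([(U, Y0), (U, D), (U, X0), (U, X1),
    (X0, Y0), (X0, X1), (X0, Δ), (X0, D),
    (X1, Δ), (X1, D),
    (E0, Y0), (E0, Δ), (o, Δ)] : List (V12 × V12))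

open V12 in
instance : Fintype V12 := ⟨{U, X0, X1, D, o, Y0, Δ, E0}, fun x => by cases x <;> decide⟩

namespace V12

instance : DecidableRel E12 := fun a b => by unfold E12; infer_instance

/-- A rank function witnessing acyclicity. -/
def rank : V12 → ℕ
  | U => 0 | E0 => 0 | o => 0 | X0 => 1 | X1 => 2 | D => 3 | Y0 => 3 | Δ => 3

lemma edge_rank : ∀ a b : V12, E12 a b → rank a < rank b := by decide

lemma not_E_D : ∀ x : V12, ¬ E12 D x := by decide
lemma not_E_Y0 : ∀ x : V12, ¬ E12 Y0 x := by decide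
lemma not_into_U : ∀ x : V12, ¬ E12 x U := by decide
lemma into_D : ∀ x : V12, E12 x D → x = U ∨ x = X0 ∨ x = X1 := by decide
lemma out_U : ∀ x : V12, E12 U x → x = Y0 ∨ x = D ∨ x = X0 ∨ x = X1 := by decide
lemma into_X0 : ∀ x : V12, E12 x X0 → x = U := by decide
lemma into_X1 : ∀ x : V12, E12 x X1 → x = U ∨ x = X0 := by decide

lemma no_desc_Y0 (w : V12) : ¬ Descendant E12 Y0 w := by
  intro h
  induction h with
  | single h => exact not_E_Y0 _ h
  | tail _ h ih => exact ih

lemma isDAG_E12 : IsDAG E12 := by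
  intro x h
  have : rank x < rank x := by
    have key : ∀ y : V12, Relation.TransGen E12 x y → rank x < rank y := by
      intro y hy
      induction hy with
      | single h => exact edge_rank _ _ h
      | tail _ h ih => exact ih.trans (edge_rank _ _ h)
    exact key x h
  exact lt_irrefl _ this

lemma memZ_X0 : X0 ∈ ({X0, X1, o} : Set V12) := Or.inl rfl
lemma memZ_X1 : X1 ∈ ({X0, X1, o} : Set V12) := Or.inr (Or.inl rfl)
lemma not_memZ_Y0 : Y0 ∉ ({X0, X1, o} : Set V12) := by
  intro h
  rcases h with h | h | h <;> exact V12.noConfusion h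

end V12

open V12 in
/-- **2×2 Δ-SWIG with pre-treatment time-varying covariates.**
The graph is a DAG and `{D}` and `{Δ}` are d-separated by `{X₀, X₁, o}`. -/
theorem deltaSWIG_2x2_time_varying :
    IsDAG E12 ∧ DSep E12 {D} {Δ} {X0, X1, o} := by
  refine ⟨isDAG_E12, ?_⟩
  intro k v hp h0 hk
  have h0' : v 0 = D := h0
  have hk' : v k = Δ := hk
  -- if `v j ≠ Δ` and `j ≤ k` then `j < k`
  have hlt : ∀ j ≤ k, v j ≠ Δ → j < k := by
    intro j hj hne
    refine lt_of_le_of_ne hj (fun h => hne ?_)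
    rw [h, hk']
  -- first step goes into D
  have h1 : E12 (v 1) D := by
    rcases hp.adj 0 (lt_of_lt_of_le Nat.one_pos hp.one_le) with h | h
    · rw [h0'] at h; exact absurd h (not_E_D _)
    · rwa [h0'] at h
  rcases into_D _ h1 with e1 | e1 | e1
  · -- v 1 = U
    have hk1 : 1 < k := hlt 1 hp.one_le (by rw [e1]; exact fun h => V12.noConfusion h)
    have hk2 : 2 ≤ k := hk1
    have h2 : E12 U (v 2) := by
      rcases hp.adj 1 hk1 with h | h
      · rwa [e1] at h
      · rw [e1] at h; exact absurd h (not_into_U _)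
    rcases out_U _ h2 with e2 | e2 | e2 | e2
    · -- v 2 = Y0 : collider with no descendants
      have hk2' : 2 < k := hlt 2 hk2 (by rw [e2]; exact fun h => V12.noConfusion h)
      have h3 : E12 (v 3) Y0 := by
        rcases hp.adj 2 hk2' with h | h
        · rw [e2] at h; exact absurd h (not_E_Y0 _)
        · rwa [e2] at h
      refine ⟨2, Nat.zero_lt_two, hk2', Or.inr ⟨⟨?_, ?_⟩, ?_, ?_⟩⟩
      · show E12 (v 1) (v 2); rw [e1, e2]; decide
      · show E12 (v 3) (v 2); rw [e2]; exact h3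
      · rw [e2]; exact not_memZ_Y0
      · rw [e2]; exact fun w h _ => no_desc_Y0 w h
    · -- v 2 = D : impossible (equals v 0)
      exfalso
      have := hp.inj 2 hk2 0 (Nat.zero_le _) (by rw [e2, h0'])
      exact two_ne_zero this
    · -- v 2 = X0 : non-collider in Z
      have hk2' : 2 < k := hlt 2 hk2 (by rw [e2]; exact fun h => V12.noConfusion h)
      refine ⟨2, Nat.zero_lt_two, hk2', Or.inl ⟨?_, by rw [e2]; exact memZ_X0⟩⟩
      rintro ⟨-, hc⟩
      rw [e2] at hc
      have e3 : v 3 = U := into_X0 _ hc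
      have := hp.inj 3 hk2' 1 hp.one_le (by rw [e3, e1])
      exact Nat.noConfusion (Nat.succ.inj this)
    · -- v 2 = X1
      have hk2' : 2 < k := hlt 2 hk2 (by rw [e2]; exact fun h => V12.noConfusion h)
      by_cases hE : E12 (v 3) X1
      · rcases into_X1 _ hE with e3 | e3
        · exfalso
          have := hp.inj 3 hk2' 1 hp.one_le (by rw [e3, e1])
          exact Nat.noConfusion (Nat.succ.inj this)
        · -- v 3 = X0 : non-collider in Z at j = 3
          have hk3 : 3 < k := hlt 3 hk2' (by rw [e3]; exact fun h => V12.noConfusion h)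
          refine ⟨3, Nat.zero_lt_succ _, hk3, Or.inl ⟨?_, by rw [e3]; exact memZ_X0⟩⟩
          rintro ⟨hc, -⟩
          rw [e2, e3] at hc
          exact absurd hc (by decide)
      · -- v 2 = X1 is a non-collider in Z
        refine ⟨2, Nat.zero_lt_two, hk2', Or.inl ⟨?_, by rw [e2]; exact memZ_X1⟩⟩
        rintro ⟨-, hc⟩
        rw [e2] at hc
        exact hE hc
  · -- v 1 = X0 : non-collider in Z
    have hk1 : 1 < k := hlt 1 hp.one_le (by rw [e1]; exact fun h => V12.noConfusion h)
    refine ⟨1, Nat.one_pos, hk1, Or.inl ⟨?_, by rw [e1]; exact memZ_X0⟩⟩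
    rintro ⟨hc, -⟩
    rw [h0'] at hc
    exact not_E_D _ hc
  · -- v 1 = X1 : non-collider in Z
    have hk1 : 1 < k := hlt 1 hp.one_le (by rw [e1]; exact fun h => V12.noConfusion h)
    refine ⟨1, Nat.one_pos, hk1, Or.inl ⟨?_, by rw [e1]; exact memZ_X1⟩⟩
    rintro ⟨hc, -⟩
    rw [h0'] at hc
    exact not_E_D _ hc

end DeltaSwig
end

section
/- Let G₀ be the directed graph on the eight vertices {U, X₀, X₁, D, o, Y₀, Δ, E₀} with edge set {(U,Y₀), (U,D), (U,X₀), (U,X₁), (X₀,Y₀), (X₀,X₁), (X₀,Δ), (X₀,D), (X₁,Δ), (X₁,D), (E₀,Y₀), (E₀,Δ), (o,Δ)} (the Δ-SWIG of the 2×2 difference-in-differences model with pre-treatment time-varying covariates). Let G be any directed graph obtained from G₀ by adding a nonempty subset of the three edges (Y₀,Δ) (state dependence), (Y₀,D) (outcome–treatment feedback), and (Y₀,X₁) (outcome–covariate feedback). Then for every subset Z of {X₀, X₁, Y₀}, the sets {D} and {Δ} are not d-separated by Z ∪ {o} in G; that is, in the presence of any form of outcome dynamics, no set of observable variables d-separates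 the treatment from the difference of untreated potential outcomes, so conditional parallel trends cannot be deduced from the graph. -/
namespace DeltaSwig

open V12 in
/-- The Δ-SWIG augmented by the outcome-dynamics edges: state dependence
`Y₀ → Δ` (if `b1`), outcome–treatment feedback `Y₀ → D` (if `b2`), and
outcome–covariate feedback `Y₀ → X₁` (if `b3`). -/
def E13 (b1 b2 b3 : Prop) : V12 → V12 → Prop := fun a b =>
  E12 a b ∨ (b1 ∧ a = Y0 ∧ b = Δ) ∨ (b2 ∧ a = Y0 ∧ b = D) ∨
    (b3 ∧ a = Y0 ∧ b = X1)

/-!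
In each case we exhibit a path from `D` to `Δ` whose colliders all lie in `Z ∪ {o}` and whose
non-colliders all avoid it. If `Y₀ ∈ Z`, the back-door path `D ← U → Y₀ ← E₀ → Δ` is open
through the collider `Y₀`. Otherwise `Y₀` can be passed as a non-collider, and each
outcome-dynamics edge opens a path through it: `D ← U → Y₀ → Δ`, `D ← Y₀ ← E₀ → Δ`, or
`D ← X₁ ← Y₀ ← E₀ → Δ`, the last rerouted as `D ← U → X₁ ← Y₀ ← E₀ → Δ` (collider `X₁`)
when `X₁ ∈ Z`.
-/

section Paths

variable {V : Type*} {E F G : V → V → Prop} {k : ℕ} {v : ℕ → V} {X Y Z : Set V}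

instance [DecidableRel E] {j : ℕ} : Decidable (IsCollider E v j) :=
  inferInstanceAs (Decidable (_ ∧ _))

theorem IsPath.mono (hEF : E ≤ F) (hp : IsPath E k v) : IsPath F k v where
  one_le := hp.one_le
  inj := hp.inj
  adj i hi := (hp.adj i hi).imp (hEF _ _) (hEF _ _)

theorem IsCollider.mono {j : ℕ} (hEF : E ≤ F) (hc : IsCollider E v j) : IsCollider F v j :=
  ⟨hEF _ _ hc.1, hEF _ _ hc.2⟩

theorem not_blocked_of_forall_interior
    (hopen : ∀ j, 0 < j → j < k → (IsCollider E v j ∧ v j ∈ Z) ∨ (¬ IsCollider E v j ∧ v j ∉ Z)) :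
    ¬ Blocked E k v Z := by
  rintro ⟨j, hj0, hjk, ⟨hnc, hmem⟩ | ⟨hc, hnmem, -⟩⟩
  · rcases hopen j hj0 hjk with ⟨hc, -⟩ | ⟨-, hnmem⟩
    exacts [hnc hc, hnmem hmem]
  · rcases hopen j hj0 hjk with ⟨-, hmem⟩ | ⟨hnc, -⟩
    exacts [hnmem hmem, hnc hc]

/-- Bracketing `F` between `E` and `G` lets the collider facts be decided in `E` and `G` when
the edges of `F` are not decidable. -/
theorem not_dSep_of_isPath_of_le (hEF : E ≤ F) (hFG : F ≤ G) (hp : IsPath E k v)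
    (h0 : v 0 ∈ X) (hk : v k ∈ Y)
    (hopen : ∀ j, 0 < j → j < k →
      (IsCollider E v j ∧ v j ∈ Z) ∨ (¬ IsCollider G v j ∧ v j ∉ Z)) :
    ¬ DSep F X Y Z := fun hsep =>
  not_blocked_of_forall_interior (fun j hj0 hjk => (hopen j hj0 hjk).imp
    (And.imp_left (IsCollider.mono hEF)) (And.imp_left (mt (IsCollider.mono hFG))))
    (hsep k v (hp.mono hEF) h0 hk)

end Paths

open V12

instance : DecidableRel E12 := fun a b => inferInstanceAs (Decidable ((a, b) ∈ _))

instance (b1 b2 b3 : Prop) [Decidable b1] [Decidable b2] [Decidable b3] :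
    DecidableRel (E13 b1 b2 b3) := fun a b =>
  inferInstanceAs (Decidable (E12 a b ∨ _))

theorem E13_mono {b1 b2 b3 c1 c2 c3 : Prop} (h1 : b1 → c1) (h2 : b2 → c2) (h3 : b3 → c3) :
    E13 b1 b2 b3 ≤ E13 c1 c2 c3 := fun _ _ h =>
  h.imp_right (Or.imp (And.imp_left h1) (Or.imp (And.imp_left h2) (And.imp_left h3)))

theorem E13_le_top (b1 b2 b3 : Prop) : E13 b1 b2 b3 ≤ E13 True True True :=
  E13_mono (fun _ => trivial) (fun _ => trivial) (fun _ => trivial)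

theorem notMem_union_o {Z : Set V12} (hZ : Z ⊆ {X0, X1, Y0}) {a : V12}
    (ha : a ∉ ({X0, X1, Y0, o} : Finset V12)) : a ∉ Z ∪ {o} := by
  rintro (h | rfl)
  · rcases hZ h with rfl | rfl | rfl <;> simp at ha
  · simp at ha

section OpenPaths

variable {b1 b2 b3 : Prop} {Z : Set V12}

theorem not_dSep_of_Y0_mem (hZ : Z ⊆ {X0, X1, Y0}) (hY : Y0 ∈ Z) :
    ¬ DSep (E13 b1 b2 b3) {D} {Δ} (Z ∪ {o}) := by
  refine not_dSep_of_isPath_of_le (E := E13 False False False)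
    (E13_mono False.elim False.elim False.elim) (E13_le_top b1 b2 b3)
    (k := 4) (v := ([D, U, Y0, E0, Δ].getD · Δ)) ⟨by norm_num, by decide, by decide⟩ rfl rfl ?_
  intro j hj0 hjk
  interval_cases j
  · exact .inr ⟨by decide, notMem_union_o hZ (by decide)⟩
  · exact .inl ⟨by decide, .inl hY⟩
  · exact .inr ⟨by decide, notMem_union_o hZ (by decide)⟩

theorem not_dSep_of_stateDependence (hZ : Z ⊆ {X0, X1, Y0}) (hY : Y0 ∉ Z) (hb : b1) :
    ¬ DSep (E13 b1 b2 b3) {D} {Δ} (Z ∪ {o}) := by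
  refine not_dSep_of_isPath_of_le (E := E13 True False False)
    (E13_mono (fun _ => hb) False.elim False.elim) (E13_le_top b1 b2 b3)
    (k := 3) (v := ([D, U, Y0, Δ].getD · Δ)) ⟨by norm_num, by decide, by decide⟩ rfl rfl ?_
  intro j hj0 hjk
  interval_cases j
  · exact .inr ⟨by decide, notMem_union_o hZ (by decide)⟩
  · exact .inr ⟨by decide, by simp [hY]⟩

theorem not_dSep_of_treatmentFeedback (hZ : Z ⊆ {X0, X1, Y0}) (hY : Y0 ∉ Z) (hb : b2) :
    ¬ DSep (E13 b1 b2 b3) {D} {Δ} (Z ∪ {o}) := by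
  refine not_dSep_of_isPath_of_le (E := E13 False True False)
    (E13_mono False.elim (fun _ => hb) False.elim) (E13_le_top b1 b2 b3)
    (k := 3) (v := ([D, Y0, E0, Δ].getD · Δ)) ⟨by norm_num, by decide, by decide⟩ rfl rfl ?_
  intro j hj0 hjk
  interval_cases j
  · exact .inr ⟨by decide, by simp [hY]⟩
  · exact .inr ⟨by decide, notMem_union_o hZ (by decide)⟩

theorem not_dSep_of_covariateFeedback_of_X1_mem (hZ : Z ⊆ {X0, X1, Y0}) (hY : Y0 ∉ Z)
    (hX : X1 ∈ Z) (hb : b3) : ¬ DSep (E13 b1 b2 b3) {D} {Δ} (Z ∪ {o}) := by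
  refine not_dSep_of_isPath_of_le (E := E13 False False True)
    (E13_mono False.elim False.elim (fun _ => hb)) (E13_le_top b1 b2 b3)
    (k := 5) (v := ([D, U, X1, Y0, E0, Δ].getD · Δ)) ⟨by norm_num, by decide, by decide⟩
    rfl rfl ?_
  intro j hj0 hjk
  interval_cases j
  · exact .inr ⟨by decide, notMem_union_o hZ (by decide)⟩
  · exact .inl ⟨by decide, .inl hX⟩
  · exact .inr ⟨by decide, by simp [hY]⟩
  · exact .inr ⟨by decide, notMem_union_o hZ (by decide)⟩

theorem not_dSep_of_covariateFeedback_of_X1_notMem (hZ : Z ⊆ {X0, X1, Y0}) (hY : Y0 ∉ Z)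
    (hX : X1 ∉ Z) (hb : b3) : ¬ DSep (E13 b1 b2 b3) {D} {Δ} (Z ∪ {o}) := by
  refine not_dSep_of_isPath_of_le (E := E13 False False True)
    (E13_mono False.elim False.elim (fun _ => hb)) (E13_le_top b1 b2 b3)
    (k := 4) (v := ([D, X1, Y0, E0, Δ].getD · Δ)) ⟨by norm_num, by decide, by decide⟩ rfl rfl ?_
  intro j hj0 hjk
  interval_cases j
  · exact .inr ⟨by decide, by simp [hX]⟩
  · exact .inr ⟨by decide, by simp [hY]⟩
  · exact .inr ⟨by decide, notMem_union_o hZ (by decide)⟩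

end OpenPaths

open V12 in
/-- **no conditional parallel trends under outcome dynamics.**
If the 2×2 Δ-SWIG is augmented by a nonempty subset of the edges `Y₀ → Δ`,
`Y₀ → D`, `Y₀ → X₁`, then for every subset `Z` of the observable variables
`{X₀, X₁, Y₀}`, the sets `{D}` and `{Δ}` are not d-separated by `Z ∪ {o}`. -/
theorem no_dsep_with_outcome_dynamics (b1 b2 b3 : Prop) (hne : b1 ∨ b2 ∨ b3) :
    ∀ Z : Set V12, Z ⊆ {X0, X1, Y0} →
      ¬ DSep (E13 b1 b2 b3) {D} {Δ} (Z ∪ {o}) := by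
  intro Z hZ
  by_cases hY : Y0 ∈ Z
  · exact not_dSep_of_Y0_mem hZ hY
  rcases hne with hb | hb | hb
  · exact not_dSep_of_stateDependence hZ hY hb
  · exact not_dSep_of_treatmentFeedback hZ hY hb
  · by_cases hX : X1 ∈ Z
    · exact not_dSep_of_covariateFeedback_of_X1_mem hZ hY hX hb
    · exact not_dSep_of_covariateFeedback_of_X1_notMem hZ hY hX hb

end DeltaSwig
end

section
/- Let G be the directed graph on the eleven vertices {U, X₀, X₁, X₂, D₁, D₂, o₁, o₂, Δ₁, Δ₂, E₁} with edge set {(U,D₁), (U,D₂), (U,X₀), (U,X₁), (U,X₂), (X₀,Δ₁), (X₀,Δ₂), (X₁,Δ₁), (X₁,Δ₂), (X₂,Δ₂), (X₀,D₁), (X₁,D₁), (X₀,D₂), (X₁,D₂), (X₂,D₂), (X₀,X₁), (X₁,X₂), (E₁,Δ₁), (E₁,Δ₂), (o₁,D₂), (o₁,Δ₁), (o₁,Δ₂), (o₂,Δ₂)}. (This is the pruned Δ-SWIG of the three-period staggered difference-in-differences model without treatment–covariate feedback: U is the unobserved time-invariant confounder with additively separable effect, X₀, X₁, X₂ are time-varying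 covariates, D₁ and D₂ = D₂(0) are the random parts of the split treatment nodes with fixed parts o₁ and o₂, E₁ = U_{Y₁} is the exogenous noise of the period-1 outcome, and Δ₁ = ΔY₁(0), Δ₂ = ΔY₂(0,0) are the difference nodes of untreated potential outcomes.) Then in G: (i) {Δ₁} and {D₁, D₂} are d-separated by {X₀, X₁, o₁, o₂}, and also by {X₀, X₁, X₂, o₁, o₂}; (ii) {Δ₂} and {D₁, D₂} are d-separated by {X₀, X₁, X₂, o₁, o₂}. -/
namespace DeltaSwig

/-- Vertices of the pruned Δ-SWIG of the three-period staggered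
difference-in-differences model. -/
inductive V14 : Type
  | U | X0 | X1 | X2 | D1 | D2 | o1 | o2 | Δ1 | Δ2 | E1
  deriving DecidableEq

open V14 in
/-- Edges of the pruned three-period Δ-SWIG without treatment–covariate
feedback. -/
def E14 : V14 → V14 → Prop := fun a b =>
  (a, b) ∈ ([(U, D1), (U, D2), (U, X0), (U, X1), (U, X2),
    (X0, Δ1), (X0, Δ2), (X1, Δ1), (X1, Δ2), (X2, Δ2),
    (X0, D1), (X1, D1), (X0, D2), (X1, D2), (X2, D2),
    (X0, X1), (X1, X2),
    (E1, Δ1), (E1, Δ2),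
    (o1, D2), (o1, Δ1), (o1, Δ2), (o2, Δ2)] : List (V14 × V14))

/-!
Every path out of `Δᵢ` starts against an edge, since `Δᵢ` is a sink. If its second vertex
is a parent in the conditioning set, that parent is a non-collider in `Z`. The only other
parent is the source `E₁`, so the path continues `Δᵢ ← E₁ → Δⱼ ← ⋯`, and the sink `Δⱼ`,
having no descendants and lying outside `Z`, is a blocking collider.
-/

section SinksAndSources

variable {V : Type*} {E : V → V → Prop}

def IsSink (E : V → V → Prop) (a : V) : Prop := ∀ b, ¬ E a b

def IsSource (E : V → V → Prop) (a : V) : Prop := ∀ b, ¬ E b a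

theorem IsSink.not_descendant {a : V} (ha : IsSink E a) (w : V) : ¬ Descendant E a w := by
  intro h
  induction h with
  | single hab => exact ha _ hab
  | tail _ _ ih => exact ih

namespace IsPath

variable {k : ℕ} {v : ℕ → V}

theorem edge_into_sink (hp : IsPath E k v) {i : ℕ} (hi : i < k) (hsink : IsSink E (v i)) :
    E (v (i + 1)) (v i) :=
  (hp.adj i hi).resolve_left (hsink _)

theorem edge_out_of_source (hp : IsPath E k v) {i : ℕ} (hi : i < k)
    (hsource : IsSource E (v i)) : E (v i) (v (i + 1)) :=
  (hp.adj i hi).resolve_right (hsource _)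

end IsPath

theorem blocked_of_noncollider_mem {k : ℕ} {v : ℕ → V} {Z : Set V} {j : ℕ}
    (hj : 0 < j) (hjk : j < k) (hnc : ¬ IsCollider E v j) (hZ : v j ∈ Z) :
    Blocked E k v Z :=
  ⟨j, hj, hjk, .inl ⟨hnc, hZ⟩⟩

theorem blocked_of_sink_collider {k : ℕ} {v : ℕ → V} {Z : Set V} {j : ℕ}
    (hj : 0 < j) (hjk : j < k) (hc : IsCollider E v j) (hZ : v j ∉ Z)
    (hsink : IsSink E (v j)) : Blocked E k v Z :=
  ⟨j, hj, hjk, .inr ⟨hc, hZ, fun w hw _ => hsink.not_descendant w hw⟩⟩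

/-- A parent `p ∉ Z` is allowed if it is a source: a path `x ← p → c ⋯` is then blocked at
the sink `c`. -/
theorem dsep_of_isSink {x : V} {Y Z : Set V} (hx : IsSink E x)
    (hpar : ∀ p, E p x → p ∉ Y ∧
      (p ∈ Z ∨ IsSource E p ∧ ∀ c, E p c → IsSink E c ∧ c ∉ Z ∧ c ∉ Y)) :
    DSep E {x} Y Z := by
  rintro k v hp rfl hk
  have hv1 : E (v 1) (v 0) := hp.edge_into_sink hp.one_le hx
  obtain ⟨hv1Y, hv1⟩ := hpar _ hv1
  have hk1 : 1 < k := lt_of_le_of_ne hp.one_le fun h => hv1Y (h ▸ hk)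
  obtain hv1Z | ⟨hsource, hchild⟩ := hv1
  · exact blocked_of_noncollider_mem one_pos hk1 (fun hc => hx _ hc.1) hv1Z
  have hv2 : E (v 1) (v 2) := hp.edge_out_of_source hk1 hsource
  obtain ⟨hsink2, hv2Z, hv2Y⟩ := hchild _ hv2
  have hk2 : 2 < k := lt_of_le_of_ne hk1 fun h => hv2Y (h ▸ hk)
  exact blocked_of_sink_collider two_pos hk2 ⟨hv2, hp.edge_into_sink hk2 hsink2⟩ hv2Z hsink2

end SinksAndSources

section E14

open V14

theorem isSink_E14 {x : V14} (hx : x = D1 ∨ x = D2 ∨ x = Δ1 ∨ x = Δ2) : IsSink E14 x := by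
  rcases hx with rfl | rfl | rfl | rfl <;> intro b <;> cases b <;> simp [E14]

theorem isSource_E14_E1 : IsSource E14 E1 := by
  intro a; cases a <;> simp [E14]

theorem E14_E1_children {c : V14} (h : E14 E1 c) : c = Δ1 ∨ c = Δ2 := by
  cases c <;> simp_all [E14]

theorem dsep_E14 {x : V14} {Z : Set V14} (hx : x = Δ1 ∨ x = Δ2)
    (hpar : ∀ p, E14 p x → p ≠ E1 → p ∈ Z) (hΔ1 : Δ1 ∉ Z) (hΔ2 : Δ2 ∉ Z) :
    DSep E14 {x} {D1, D2} Z := by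
  refine dsep_of_isSink (isSink_E14 (by tauto)) fun p hp => ⟨?_, ?_⟩
  · rintro (rfl | rfl)
    exacts [isSink_E14 (.inl rfl) _ hp, isSink_E14 (.inr (.inl rfl)) _ hp]
  by_cases hE : p = E1
  · subst hE
    refine .inr ⟨isSource_E14_E1, fun c hc => ?_⟩
    rcases E14_E1_children hc with rfl | rfl
    · exact ⟨isSink_E14 (by simp), hΔ1, by simp⟩
    · exact ⟨isSink_E14 (by simp), hΔ2, by simp⟩
  · exact .inl (hpar p hp hE)

end E14

open V14 in
/-- **three-period Δ-SWIG without treatment–covariate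
feedback.** In the pruned Δ-SWIG: (i) `{Δ₁}` and `{D₁, D₂}` are d-separated
by `{X₀, X₁, o₁, o₂}`, and also by `{X₀, X₁, X₂, o₁, o₂}`; (ii) `{Δ₂}` and
`{D₁, D₂}` are d-separated by `{X₀, X₁, X₂, o₁, o₂}`. -/
theorem deltaSWIG_three_periods :
    DSep E14 {Δ1} {D1, D2} {X0, X1, o1, o2} ∧
    DSep E14 {Δ1} {D1, D2} {X0, X1, X2, o1, o2} ∧
    DSep E14 {Δ2} {D1, D2} {X0, X1, X2, o1, o2} := by
  refine ⟨dsep_E14 (.inl rfl) ?_ (by simp) (by simp),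
    dsep_E14 (.inl rfl) ?_ (by simp) (by simp), dsep_E14 (.inr rfl) ?_ (by simp) (by simp)⟩ <;>
  · intro p hp hE
    cases p <;> simp_all [E14]

end DeltaSwig
end
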